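/- arXiv:2305.06788 — 7 statements merged into one kernel-verified Lean document; each statement's English description precedes it below -/
import Mathlib

section
/- Let A ⊆ ℝⁿ be a bounded set with measure-zero (topological) boundary and S ⊆ ℝⁿ bounded. Then the function φ : ℝⁿ → ℝ defined by φ(z) = μ((A + z) ∩ S) is continuous. More precisely, for any z₁, z₂ ∈ ℝⁿ, |φ(z₁) − φ(z₂)| ≤ μ(A + ‖z₁ − z₂‖·Bₙ) − μ(A), where Bₙ is the closed unit ball, and this difference tends to 0 as ‖z₁ − z₂‖ → 0 because μ(closure(A)) = μ(A). -/
/-!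
If `A` is translated from `z₂` to `z₁`, every point it gains lies in the translate by `z₂` of
`(A + r Bₙ) \ A`, where `r = ‖z₁ - z₂‖`. By translation invariance, `μ((A + z₁) ∩ S)` therefore
exceeds `μ((A + z₂) ∩ S)` by at most `μ(A + r Bₙ) - μ(A)`. As `r → 0` the sets `A + r Bₙ` shrink
inside the closed thickenings of `A`, whose measures decrease to `μ(closure A)`, and this equals
`μ(A)` because the frontier of `A` is null.
-/

open MeasureTheory Metric Pointwise Filter Topology

section Translates

variable {E : Type*} [SeminormedAddCommGroup E]

theorem subset_add_closedBall_zero (A : Set E) {r : ℝ} (hr : 0 ≤ r) :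
    A ⊆ A + closedBall (0 : E) r :=
  fun a ha => ⟨a, ha, 0, mem_closedBall_self hr, add_zero a⟩

theorem add_closedBall_zero_subset_cthickening (A : Set E) (r : ℝ) :
    A + closedBall (0 : E) r ⊆ cthickening r A := by
  rintro _ ⟨a, ha, b, hb, rfl⟩
  refine mem_cthickening_of_dist_le _ a r A ha ?_
  simpa [dist_eq_norm] using hb

theorem image_add_right_sdiff_image_add_right_subset (A : Set E) (z₁ z₂ : E) :
    (fun a => a + z₁) '' A \ (fun a => a + z₂) '' A ⊆
      (fun a => a + z₂) '' ((A + closedBall (0 : E) ‖z₁ - z₂‖) \ A) := by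
  rw [Set.image_sdiff (add_left_injective z₂)]
  refine Set.sdiff_subset_sdiff_left ?_
  rintro _ ⟨a, ha, rfl⟩
  exact ⟨a + (z₁ - z₂), Set.add_mem_add ha (mem_closedBall_zero_iff.2 le_rfl),
    by simp only [add_assoc, sub_add_cancel]⟩

end Translates

theorem MeasureTheory.measure_inter_le_measure_inter_add_measure_sdiff {α : Type*}
    [MeasurableSpace α] (μ : Measure α) (s t u : Set α) :
    μ (s ∩ u) ≤ μ (t ∩ u) + μ (s \ t) :=
  calc μ (s ∩ u) ≤ μ (t ∩ u ∪ s \ t) :=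
        measure_mono fun x hx => by by_cases hxt : x ∈ t <;> simp_all
    _ ≤ μ (t ∩ u) + μ (s \ t) := measure_union_le _ _

theorem tendsto_measure_add_closedBall_zero {E : Type*} [NormedAddCommGroup E] [ProperSpace E]
    [MeasurableSpace E] [OpensMeasurableSpace E] {μ : Measure E} [IsFiniteMeasureOnCompacts μ]
    {A : Set E} (hAb : Bornology.IsBounded A)
    (hcl : μ (closure A) = μ A) :
    Tendsto (fun r => μ (A + closedBall 0 r)) (𝓝[≥] 0) (𝓝 (μ A)) := by
  have hthick : Tendsto (fun r => μ (cthickening r A)) (𝓝 0) (𝓝 (μ A)) :=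
    hcl ▸ tendsto_measure_cthickening ⟨1, one_pos, hAb.cthickening.measure_lt_top.ne⟩
  refine tendsto_of_tendsto_of_tendsto_of_le_of_le' tendsto_const_nhds
    (hthick.mono_left nhdsWithin_le_nhds) ?_ ?_
  · exact eventually_nhdsWithin_of_forall fun r hr =>
      measure_mono (subset_add_closedBall_zero A hr)
  · exact Eventually.of_forall fun r => measure_mono (add_closedBall_zero_subset_cthickening A r)

section Measure

variable {E : Type*} [NormedAddCommGroup E] [MeasurableSpace E] [BorelSpace E]
  (μ : Measure E) [μ.IsAddRightInvariant]

theorem measure_image_add_right (z : E) (s : Set E) : μ ((fun a => a + z) '' s) = μ s := by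
  rw [Set.image_add_right, measure_preimage_add_right]

theorem measure_image_add_right_inter_le {A : Set E} (hA : NullMeasurableSet A μ)
    (hA' : μ A ≠ ⊤) (S : Set E) (z₁ z₂ : E) :
    μ ((fun a => a + z₁) '' A ∩ S) ≤
      μ ((fun a => a + z₂) '' A ∩ S) + (μ (A + closedBall 0 ‖z₁ - z₂‖) - μ A) := by
  have hgain : μ ((fun a => a + z₁) '' A \ (fun a => a + z₂) '' A) ≤
      μ (A + closedBall 0 ‖z₁ - z₂‖) - μ A :=
    calc _ ≤ μ ((fun a => a + z₂) '' ((A + closedBall 0 ‖z₁ - z₂‖) \ A)) :=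
          measure_mono (image_add_right_sdiff_image_add_right_subset A z₁ z₂)
      _ = μ (A + closedBall 0 ‖z₁ - z₂‖) - μ A := by
          rw [measure_image_add_right,
            measure_sdiff (subset_add_closedBall_zero A (norm_nonneg _)) hA hA']
  exact (measure_inter_le_measure_inter_add_measure_sdiff μ _ _ S).trans (by gcongr)

variable [ProperSpace E] [IsFiniteMeasureOnCompacts μ]

theorem abs_measureReal_image_add_right_inter_sub_le {A : Set E} (hA : NullMeasurableSet A μ)
    (hAb : Bornology.IsBounded A) (S : Set E) (z₁ z₂ : E) :
    |(μ ((fun a => a + z₁) '' A ∩ S)).toReal - (μ ((fun a => a + z₂) '' A ∩ S)).toReal| ≤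
      (μ (A + closedBall 0 ‖z₁ - z₂‖)).toReal - (μ A).toReal := by
  have hA' : μ A ≠ ⊤ := hAb.measure_lt_top.ne
  have hthick : ∀ r, μ (A + closedBall 0 r) ≠ ⊤ :=
    fun r => (hAb.add isBounded_closedBall).measure_lt_top.ne
  have hinter : ∀ z, μ ((fun a => a + z) '' A ∩ S) ≠ ⊤ := fun z =>
    ((measure_mono Set.inter_subset_left).trans_lt
      (by rw [measure_image_add_right]; exact hA'.lt_top)).ne
  have one_side : ∀ w₁ w₂ : E,
      (μ ((fun a => a + w₁) '' A ∩ S)).toReal - (μ ((fun a => a + w₂) '' A ∩ S)).toReal ≤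
        (μ (A + closedBall 0 ‖w₁ - w₂‖)).toReal - (μ A).toReal := by
    intro w₁ w₂
    have hgap : μ (A + closedBall 0 ‖w₁ - w₂‖) - μ A ≠ ⊤ := ENNReal.sub_ne_top (hthick _)
    have h := ENNReal.toReal_mono (ENNReal.add_ne_top.2 ⟨hinter w₂, hgap⟩)
      (measure_image_add_right_inter_le μ hA hA' S w₁ w₂)
    rw [ENNReal.toReal_add (hinter w₂) hgap, ENNReal.toReal_sub_of_le
      (measure_mono (subset_add_closedBall_zero A (norm_nonneg _))) (hthick _)] at h
    linarith
  refine abs_sub_le_iff.2 ⟨one_side z₁ z₂, ?_⟩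
  simpa only [norm_sub_rev] using one_side z₂ z₁

theorem continuous_measureReal_image_add_right_inter {A : Set E} (hAb : Bornology.IsBounded A)
    (hAfr : μ (frontier A) = 0) (S : Set E) :
    Continuous fun z => (μ ((fun a => a + z) '' A ∩ S)).toReal := by
  refine continuous_iff_continuousAt.2 fun z₀ => tendsto_iff_dist_tendsto_zero.2 ?_
  have hgap : Tendsto (fun z => (μ (A + closedBall 0 ‖z - z₀‖)).toReal - (μ A).toReal)
      (𝓝 z₀) (𝓝 0) := by
    have h := (ENNReal.tendsto_toReal hAb.measure_lt_top.ne).comp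
      ((tendsto_measure_add_closedBall_zero hAb (measure_closure_of_null_frontier hAfr)).comp
        (tendsto_norm_sub_self_nhdsGE z₀))
    simpa only [Function.comp_def, sub_self] using h.sub_const (μ A).toReal
  exact squeeze_zero (fun _ => dist_nonneg) (fun z =>
    abs_measureReal_image_add_right_inter_sub_le μ (nullMeasurableSet_of_null_frontier hAfr)
      hAb S z z₀) hgap

end Measure

theorem stmt_2_general (n : ℕ) (A S : Set (EuclideanSpace ℝ (Fin n)))
    (hAb : Bornology.IsBounded A)
    (hAfr : volume (frontier A) = 0) :
    Continuous (fun z => (volume (((fun a => a + z) '' A) ∩ S)).toReal) ∧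
    (∀ z₁ z₂ : EuclideanSpace ℝ (Fin n),
      |(volume (((fun a => a + z₁) '' A) ∩ S)).toReal
          - (volume (((fun a => a + z₂) '' A) ∩ S)).toReal|
        ≤ (volume (A + Metric.closedBall (0 : EuclideanSpace ℝ (Fin n)) ‖z₁ - z₂‖)).toReal
          - (volume A).toReal) ∧
    volume (closure A) = volume A :=
  ⟨continuous_measureReal_image_add_right_inter volume hAb hAfr S,
    abs_measureReal_image_add_right_inter_sub_le volume
      (nullMeasurableSet_of_null_frontier hAfr) hAb S,
    measure_closure_of_null_frontier hAfr⟩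

/-- For `A` bounded with measure-zero boundary and `S` bounded, `φ(z) = μ((A+z) ∩ S)` is
continuous; quantitatively `|φ(z₁) − φ(z₂)| ≤ μ(A + ‖z₁−z₂‖Bₙ) − μ(A)`, and
`μ(closure A) = μ(A)`. -/
theorem stmt_2 (n : ℕ) (A S : Set (EuclideanSpace ℝ (Fin n)))
    (hAm : MeasurableSet A) (hSm : MeasurableSet S)
    (hAb : Bornology.IsBounded A) (hSb : Bornology.IsBounded S)
    (hAfr : volume (frontier A) = 0) :
    Continuous (fun z => (volume (((fun a => a + z) '' A) ∩ S)).toReal) ∧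
    (∀ z₁ z₂ : EuclideanSpace ℝ (Fin n),
      |(volume (((fun a => a + z₁) '' A) ∩ S)).toReal
          - (volume (((fun a => a + z₂) '' A) ∩ S)).toReal|
        ≤ (volume (A + Metric.closedBall (0 : EuclideanSpace ℝ (Fin n)) ‖z₁ - z₂‖)).toReal
          - (volume A).toReal) ∧
    volume (closure A) = volume A :=
  stmt_2_general n A S hAb hAfr
end

section
/- Let ℓ(a) = −a·log₂(a) for a ∈ (0, 1] and ℓ(0) = 0. For any κ ≥ 1, the sum S = Σ_{i=1}^{∞} ℓ(κ/(κ+i−1) − κ/(κ+i)) converges and satisfies S ≤ log₂(κ) + 4. -/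
/-- With `ℓ(a) = −a log₂ a`, for `κ ≥ 1` the series
`Σ_{i=1}^∞ ℓ(κ/(κ+i−1) − κ/(κ+i))` converges and is at most `log₂ κ + 4`.
(Here the index `i : ℕ` starts at `0`, corresponding to the paper's `i − 1`.) -/
theorem stmt_5 (κ : ℝ) (hκ : 1 ≤ κ) :
    Summable (fun i : ℕ =>
      -(κ / (κ + i) - κ / (κ + i + 1)) * Real.logb 2 (κ / (κ + i) - κ / (κ + i + 1))) ∧
    ∑' i : ℕ, -(κ / (κ + i) - κ / (κ + i + 1)) * Real.logb 2 (κ / (κ + i) - κ / (κ + i + 1))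
      ≤ Real.logb 2 κ + 4 := by
  have hl2 : 0 < Real.log 2 := Real.log_pos one_lt_two
  have hκ0 : (0:ℝ) < κ := lt_of_lt_of_le one_pos hκ
  set f : ℕ → ℝ := fun i : ℕ =>
      -(κ / (κ + i) - κ / (κ + i + 1)) * Real.logb 2 (κ / (κ + i) - κ / (κ + i + 1)) with hfdef
  set F : ℕ → ℝ := fun i : ℕ =>
      κ / (κ + i) * (2 * Real.logb 2 (κ + i) + (1 + 2 / Real.log 2) - Real.logb 2 κ) with hFdef
  have ha : ∀ i : ℕ, (1:ℝ) ≤ κ + i := fun i =>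
    le_add_of_le_of_nonneg hκ (Nat.cast_nonneg i)
  have ha0 : ∀ i : ℕ, (0:ℝ) < κ + i := fun i => lt_of_lt_of_le one_pos (ha i)
  have hp : ∀ i : ℕ, κ / (κ + i) - κ / (κ + i + 1) = κ / ((κ + i) * (κ + i + 1)) := by
    intro i
    have h1 : (κ + i) ≠ 0 := (ha0 i).ne'
    have h2 : (κ + i + 1) ≠ 0 := by positivity
    field_simp
    ring
  -- nonnegativity of f
  have hfnonneg : ∀ i : ℕ, 0 ≤ f i := by
    intro i
    have h1 : (0:ℝ) < κ + i := ha0 i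
    have h2 : (0:ℝ) < κ + i + 1 := by linarith
    have hppos : 0 < κ / ((κ + i) * (κ + i + 1)) := by positivity
    have hple : κ / ((κ + i) * (κ + i + 1)) ≤ 1 := by
      rw [div_le_one (by positivity)]
      nlinarith [ha i]
    have hL : Real.logb 2 (κ / ((κ + i) * (κ + i + 1))) ≤ 0 :=
      Real.logb_nonpos one_lt_two hppos.le hple
    simp only [hfdef, hp i]
    nlinarith
  -- nonnegativity of F
  have hFnonneg : ∀ i : ℕ, 0 ≤ F i := by
    intro i
    have h1 : (0:ℝ) < κ + i := ha0 i
    have hlogκ : Real.logb 2 κ ≤ Real.logb 2 (κ + i) :=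
      (Real.logb_le_logb one_lt_two hκ0 h1).mpr
        (by linarith [(Nat.cast_nonneg i : (0:ℝ) ≤ (i:ℝ))])
    have hlognn : 0 ≤ Real.logb 2 (κ + i) := Real.logb_nonneg one_lt_two (ha i)
    have hq : 0 ≤ 2 * Real.logb 2 (κ + i) + (1 + 2 / Real.log 2) - Real.logb 2 κ := by
      have h2 : 0 ≤ 2 / Real.log 2 := by positivity
      linarith
    simp only [hFdef]
    positivity
  -- the key telescoping bound
  have key : ∀ i : ℕ, f i ≤ F i - F (i + 1) := by
    intro i
    have h1 : (0:ℝ) < κ + i := ha0 i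
    have h1' : (1:ℝ) ≤ κ + i := ha i
    have h2 : (0:ℝ) < κ + i + 1 := by linarith
    -- log bounds
    have hδa : Real.log (κ + i + 1) - Real.log (κ + i) ≤ 1 / (κ + i) := by
      have hd : Real.log ((κ + i + 1) / (κ + i)) ≤ (κ + i + 1) / (κ + i) - 1 :=
        Real.log_le_sub_one_of_pos (by positivity)
      rw [Real.log_div h2.ne' h1.ne'] at hd
      have he : (κ + i + 1) / (κ + i) - 1 = 1 / (κ + i) := by field_simp; ring
      linarith [he ▸ hd]
    have hδ2 : Real.log (κ + i + 1) - Real.log (κ + i) ≤ Real.log 2 := by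
      have hm : Real.log (κ + i + 1) ≤ Real.log (2 * (κ + i)) := by
        apply Real.log_le_log (by linarith)
        linarith
      rw [Real.log_mul two_ne_zero h1.ne'] at hm
      linarith
    have haδ : (κ + i) * (Real.log (κ + i + 1) - Real.log (κ + i)) ≤ 1 := by
      have hmm := mul_le_mul_of_nonneg_left hδa h1.le
      have hone : (κ + i) * (1 / (κ + i)) = 1 := by field_simp
      linarith [hone ▸ hmm]
    -- main inequality in natural-log form
    have hmain : κ / ((κ + i) * (κ + i + 1)) *
          (Real.log (κ + i) + Real.log (κ + i + 1) - Real.log κ)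
        ≤ κ / (κ + i) * (2 * Real.log (κ + i) + (Real.log 2 + 2) - Real.log κ)
          - κ / (κ + i + 1) * (2 * Real.log (κ + i + 1) + (Real.log 2 + 2) - Real.log κ) := by
      have hident : κ / (κ + i) * (2 * Real.log (κ + i) + (Real.log 2 + 2) - Real.log κ)
          - κ / (κ + i + 1) * (2 * Real.log (κ + i + 1) + (Real.log 2 + 2) - Real.log κ)
          - κ / ((κ + i) * (κ + i + 1)) *
              (Real.log (κ + i) + Real.log (κ + i + 1) - Real.log κ)
          = κ / ((κ + i) * (κ + i + 1)) *
            ((Real.log 2 + 2)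
              - (2 * (κ + i) + 1) * (Real.log (κ + i + 1) - Real.log (κ + i))) := by
        field_simp
        ring
      have hpos : 0 < κ / ((κ + i) * (κ + i + 1)) := by positivity
      have hbound : (2 * (κ + i) + 1) * (Real.log (κ + i + 1) - Real.log (κ + i))
          ≤ Real.log 2 + 2 := by
        nlinarith [haδ, hδ2]
      nlinarith [mul_nonneg hpos.le (sub_nonneg.mpr hbound)]
    -- convert to logb form
    simp only [hfdef, hFdef, hp i, Real.logb]
    push_cast
    have hlogp : Real.log (κ / ((κ + (i:ℝ)) * (κ + (i:ℝ) + 1)))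
        = Real.log κ - (Real.log (κ + (i:ℝ)) + Real.log (κ + (i:ℝ) + 1)) := by
      rw [Real.log_div hκ0.ne' (by positivity), Real.log_mul h1.ne' h2.ne']
    rw [hlogp]
    refine le_trans (le_of_eq ?_)
      (le_trans ((div_le_div_iff_of_pos_right hl2).mpr hmain) (le_of_eq ?_))
    · ring
    · field_simp
      ring
  -- partial sums bounded by F 0
  have hsum : ∀ n : ℕ, ∑ i ∈ Finset.range n, f i ≤ F 0 := by
    intro n
    calc ∑ i ∈ Finset.range n, f i
        ≤ ∑ i ∈ Finset.range n, (F i - F (i + 1)) :=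
          Finset.sum_le_sum fun i _ => key i
      _ = F 0 - F n := Finset.sum_range_sub' F n
      _ ≤ F 0 := by linarith [hFnonneg n]
  have hF0 : F 0 ≤ Real.logb 2 κ + 4 := by
    have h20 : F 0 = Real.logb 2 κ + (1 + 2 / Real.log 2) := by
      simp only [hFdef]
      norm_num
      field_simp
      ring
    rw [h20]
    have hlog2 : (0.6931471803 : ℝ) < Real.log 2 := Real.log_two_gt_d9
    have : 2 / Real.log 2 ≤ 3 := by
      rw [div_le_iff₀ hl2]
      linarith
    linarith
  have hsummable : Summable f := summable_of_sum_range_le hfnonneg hsum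
  exact ⟨hsummable, le_trans (Summable.tsum_le_of_sum_range_le hsummable hsum) hF0⟩
end

section
/- Let n ≥ 1 and let S = (μ(Bₙ))^{1/n}·[−1/2, 1/2)ⁿ be the cube with the same volume as the unit ball Bₙ. Then the Minkowski difference S − Bₙ is contained in the ball of radius (√n/2)·(μ(Bₙ))^{1/n} + 1 centered at the origin, and hence μ(S − Bₙ) ≤ (√(πe/2) + 1)ⁿ · μ(Bₙ). -/
open MeasureTheory Pointwise Real

lemma gamma_lower : ∀ n : ℕ, 1 ≤ n →
    ((n : ℝ) / (2 * Real.exp 1)) ^ ((n : ℝ) / 2) ≤ Real.Gamma ((n : ℝ) / 2 + 1) := by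
  have he : (0:ℝ) < Real.exp 1 := Real.exp_pos 1
  intro n
  induction n using Nat.strong_induction_on with
  | _ n IH =>
    match n with
    | 0 => intro h; omega
    | 1 =>
      intro _
      have h1 : Real.Gamma ((1:ℝ)/2 + 1) = (1/2) * Real.sqrt π := by
        rw [Real.Gamma_add_one (by norm_num), Real.Gamma_one_half_eq]
      have h2 : (1:ℝ)/2 * √π = √(π/4) := by
        rw [show (π/4:ℝ) = π * (1/2)^2 by ring, Real.sqrt_mul pi_pos.le,
          Real.sqrt_sq (by norm_num)]; ring
      push_cast
      rw [h1, h2, ← Real.sqrt_eq_rpow]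
      apply Real.sqrt_le_sqrt
      have : (2:ℝ) ≤ Real.exp 1 := by
        have := Real.add_one_le_exp 1; linarith
      rw [div_le_div_iff₀ (by positivity) (by norm_num)]
      nlinarith [Real.pi_gt_three]
    | 2 =>
      intro _
      push_cast
      norm_num
      rw [div_le_one (by positivity)]
      have := Real.add_one_le_exp 1; linarith
    | (m+3) =>
      intro _
      have hk : 1 ≤ m + 1 := by omega
      have IH' := IH (m+1) (by omega) hk
      set K : ℝ := (m:ℝ) + 1 with hK
      have hKpos : 0 < K := by positivity
      have hcast : ((m+3 : ℕ) : ℝ) = K + 2 := by push_cast [hK]; ring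
      have hcast1 : ((m+1 : ℕ) : ℝ) = K := by push_cast [hK]; ring
      rw [hcast]
      rw [hcast1] at IH'
      set x : ℝ := K / 2 with hx
      have hxpos : 0 < x := by positivity
      -- Gamma recursion
      have hG : Real.Gamma ((K+2)/2 + 1) = (x + 1) * Real.Gamma (x + 1) := by
        rw [show (K+2)/2 + 1 = (x+1) + 1 by rw [hx]; ring,
          Real.Gamma_add_one (by positivity)]
      rw [hG]
      -- key step inequality
      have h1 : ((K+2)/(2*Real.exp 1)) ^ ((K+2)/2)
          = ((K+2)/(2*Real.exp 1)) ^ x * ((K+2)/(2*Real.exp 1)) := by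
        rw [show (K+2)/2 = x + 1 by rw [hx]; ring,
          Real.rpow_add (by positivity), Real.rpow_one]
      have hsplit : ((K+2)/(2*Real.exp 1)) ^ x
          = ((K+2)/K) ^ x * (K/(2*Real.exp 1)) ^ x := by
        rw [← Real.mul_rpow (by positivity) (by positivity)]
        congr 1
        field_simp
      have hratio : ((K+2)/K) ^ x ≤ Real.exp 1 := by
        have h3 : (K+2)/K ≤ Real.exp (2/K) := by
          have := Real.add_one_le_exp (2/K)
          calc (K+2)/K = 2/K + 1 := by field_simp; ring
          _ ≤ Real.exp (2/K) := this
        calc ((K+2)/K) ^ x ≤ (Real.exp (2/K)) ^ x :=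
              Real.rpow_le_rpow (by positivity) h3 hxpos.le
        _ = Real.exp (2/K * x) := by rw [← Real.exp_mul]
        _ = Real.exp 1 := by rw [hx]; congr 1; field_simp
      have h4 : ((K+2)/(2*Real.exp 1)) ^ x ≤ Real.exp 1 * (K/(2*Real.exp 1)) ^ x := by
        rw [hsplit]
        exact mul_le_mul_of_nonneg_right hratio (by positivity)
      calc ((K+2)/(2*Real.exp 1)) ^ ((K+2)/2)
          = ((K+2)/(2*Real.exp 1)) ^ x * ((K+2)/(2*Real.exp 1)) := h1
        _ ≤ (Real.exp 1 * (K/(2*Real.exp 1)) ^ x) * ((K+2)/(2*Real.exp 1)) :=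
            mul_le_mul_of_nonneg_right h4 (by positivity)
        _ = (x + 1) * (K/(2*Real.exp 1)) ^ x := by
            rw [hx]; field_simp
        _ ≤ (x + 1) * Real.Gamma (x + 1) := by
            exact mul_le_mul_of_nonneg_left IH' (by positivity)


/-- Let `S = (μ Bₙ)^{1/n}·[−1/2, 1/2)ⁿ` be the cube with the same volume as the unit ball.
Then `S − Bₙ` is contained in the ball of radius `(√n/2)(μ Bₙ)^{1/n} + 1`, hence
`μ(S − Bₙ) ≤ (√(πe/2) + 1)ⁿ · μ(Bₙ)`. -/
theorem stmt_9 (n : ℕ) (hn : 1 ≤ n)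
    (c : ℝ)
    (hc : c = (volume (Metric.closedBall (0 : EuclideanSpace ℝ (Fin n)) 1)).toReal ^ (1 / (n : ℝ)))
    (S : Set (EuclideanSpace ℝ (Fin n)))
    (hS : S = {x : EuclideanSpace ℝ (Fin n) | ∀ i, -(c / 2) ≤ x i ∧ x i < c / 2}) :
    (S - Metric.closedBall (0 : EuclideanSpace ℝ (Fin n)) 1
        ⊆ Metric.closedBall (0 : EuclideanSpace ℝ (Fin n)) (Real.sqrt n / 2 * c + 1)) ∧
    volume (S - Metric.closedBall (0 : EuclideanSpace ℝ (Fin n)) 1)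
      ≤ ENNReal.ofReal ((Real.sqrt (Real.pi * Real.exp 1 / 2) + 1) ^ n)
          * volume (Metric.closedBall (0 : EuclideanSpace ℝ (Fin n)) 1) := by
  have hn0 : (0:ℝ) < n := by exact_mod_cast hn
  have he : (0:ℝ) < Real.exp 1 := Real.exp_pos 1
  haveI : Nonempty (Fin n) := Fin.pos_iff_nonempty.mp hn
  have hΓ : 0 < Real.Gamma ((n:ℝ)/2 + 1) := Real.Gamma_pos_of_pos (by positivity)
  have hc0 : 0 ≤ c := by
    rw [hc]; exact Real.rpow_nonneg ENNReal.toReal_nonneg _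
  -- Part 1 : the inclusion
  have hsub : S - Metric.closedBall (0 : EuclideanSpace ℝ (Fin n)) 1
      ⊆ Metric.closedBall (0 : EuclideanSpace ℝ (Fin n)) (Real.sqrt n / 2 * c + 1) := by
    intro x hx
    rw [Set.mem_sub] at hx
    obtain ⟨s, hs, b, hb, rfl⟩ := hx
    rw [Metric.mem_closedBall, dist_zero_right]
    have hb' : ‖b‖ ≤ 1 := by rwa [mem_closedBall_zero_iff] at hb
    have hs' : ‖s‖ ≤ Real.sqrt n / 2 * c := by
      rw [EuclideanSpace.norm_eq]
      have hsum : ∑ i, ‖s i‖ ^ 2 ≤ (n : ℝ) * (c/2)^2 := by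
        calc ∑ i, ‖s i‖ ^ 2 ≤ ∑ _i : Fin n, (c/2)^2 := by
              apply Finset.sum_le_sum
              intro i _
              have h1 := (hS ▸ hs) i
              rw [Real.norm_eq_abs, sq_abs]
              exact sq_le_sq' (by linarith [h1.1]) h1.2.le
          _ = (n : ℝ) * (c/2)^2 := by
              rw [Finset.sum_const, Finset.card_univ, Fintype.card_fin, nsmul_eq_mul]
      calc Real.sqrt (∑ i, ‖s i‖ ^ 2) ≤ Real.sqrt ((n:ℝ) * (c/2)^2) :=
            Real.sqrt_le_sqrt hsum
        _ = Real.sqrt n * (c/2) := by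
            rw [Real.sqrt_mul hn0.le, Real.sqrt_sq (by positivity)]
        _ = Real.sqrt n / 2 * c := by ring
    calc ‖s - b‖ ≤ ‖s‖ + ‖b‖ := norm_sub_le _ _
      _ ≤ Real.sqrt n / 2 * c + 1 := add_le_add hs' hb'
  refine ⟨hsub, ?_⟩
  -- volume of unit ball
  have hvol : volume (Metric.closedBall (0 : EuclideanSpace ℝ (Fin n)) 1)
      = ENNReal.ofReal (Real.sqrt π ^ n / Real.Gamma ((n:ℝ)/2+1)) := by
    rw [EuclideanSpace.volume_closedBall]
    simp [Fintype.card_fin]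
  have hV : (volume (Metric.closedBall (0 : EuclideanSpace ℝ (Fin n)) 1)).toReal
      = Real.sqrt π ^ n / Real.Gamma ((n:ℝ)/2+1) := by
    rw [hvol, ENNReal.toReal_ofReal (by positivity)]
  have hcn : c ^ n = Real.sqrt π ^ n / Real.Gamma ((n:ℝ)/2+1) := by
    rw [hc, ← Real.rpow_natCast (_ ^ (1/(n:ℝ))) n, ← Real.rpow_mul ENNReal.toReal_nonneg,
      one_div, inv_mul_cancel₀ (by exact_mod_cast hn0.ne'), Real.rpow_one, hV]
  -- the key inequality
  set T : ℝ := Real.sqrt (π * Real.exp 1 / 2) with hTdef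
  set A : ℝ := Real.sqrt ((n:ℝ)/(2*Real.exp 1)) with hAdef
  have hA : A ^ n = ((n:ℝ)/(2*Real.exp 1)) ^ ((n:ℝ)/2) := by
    rw [hAdef, Real.sqrt_eq_rpow, ← Real.rpow_natCast (_ ^ ((1:ℝ)/2)) n,
      ← Real.rpow_mul (by positivity)]
    congr 1; ring
  have hkey : A ^ n ≤ Real.Gamma ((n:ℝ)/2+1) := hA ▸ gamma_lower n hn
  have hid : (Real.sqrt n / 2) ^ n * Real.sqrt π ^ n = T ^ n * A ^ n := by
    rw [← mul_pow, ← mul_pow]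
    congr 1
    have h5 : π * Real.exp 1/2 * ((n:ℝ)/(2*Real.exp 1)) = (n:ℝ)*π*(1/2)^2 := by
      field_simp
    rw [hTdef, hAdef, ← Real.sqrt_mul (by positivity), h5,
      Real.sqrt_mul (by positivity), Real.sqrt_sq (by norm_num),
      Real.sqrt_mul hn0.le]
    ring
  have hT : Real.sqrt n / 2 * c ≤ T := by
    have hTpos : 0 ≤ T := Real.sqrt_nonneg _
    apply le_of_pow_le_pow_left₀ (n := n) (by omega) hTpos
    rw [mul_pow, hcn, mul_div_assoc', div_le_iff₀ hΓ, hid]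
    exact mul_le_mul_of_nonneg_left hkey (by positivity)
  -- Part 2
  have hR1 : (0:ℝ) ≤ Real.sqrt n / 2 * c + 1 := by positivity
  calc volume (S - Metric.closedBall (0 : EuclideanSpace ℝ (Fin n)) 1)
      ≤ volume (Metric.closedBall (0 : EuclideanSpace ℝ (Fin n))
          (Real.sqrt n / 2 * c + 1)) := measure_mono hsub
    _ = ENNReal.ofReal ((Real.sqrt n / 2 * c + 1) ^ n)
          * volume (Metric.closedBall (0 : EuclideanSpace ℝ (Fin n)) 1) := by
        rw [Measure.addHaar_closedBall volume _ hR1, finrank_euclideanSpace_fin,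
          ← Measure.addHaar_closedBall_eq_addHaar_ball]
    _ ≤ ENNReal.ofReal ((T + 1) ^ n)
          * volume (Metric.closedBall (0 : EuclideanSpace ℝ (Fin n)) 1) := by
        apply mul_le_mul_left
        exact ENNReal.ofReal_le_ofReal (pow_le_pow_left₀ hR1 (by linarith) n)
end

section
/- Let X be a random variable uniformly distributed on a measurable set T ⊆ ℝⁿ with 0 < μ(T) < ∞, and let Q : ℝⁿ → ℝⁿ be measurable with countable range. Then H(Q(X)) = I(X; Q(X)) = h(X) − h(X | Q(X)), and since h(X) = log μ(T) and h(X − Q(X) | Q(X)) = h(X | Q(X)) ≤ h(X − Q(X)), we conclude H(Q(X)) − log μ(T) ≥ −h(f), where f is the density of X − Q(X), i.e., the discrete entropy of the quantizer output, normalized by subtracting log μ(T), is at least the negative differential entropy of the error distribution. -/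
open MeasureTheory

/-- Let `X ~ Unif(T)` (with law `ν = μ(T)⁻¹ · μ|_T`), let `Q` be a measurable quantizer
with countable range, and let `f` be the density of the error `X − Q(X)`. Then the discrete
entropy of `Q(X)`, minus `log₂ μ(T)`, is at least `−h(f) = ∫ f log₂ f`. -/
theorem stmt_10 (n : ℕ) (T : Set (EuclideanSpace ℝ (Fin n)))
    (hTm : MeasurableSet T) (hT0 : 0 < volume T) (hTfin : volume T < ⊤)
    (Q : EuclideanSpace ℝ (Fin n) → EuclideanSpace ℝ (Fin n))
    (hQmeas : Measurable Q) (hQc : (Set.range Q).Countable)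
    (ν : Measure (EuclideanSpace ℝ (Fin n)))
    (hν : ν = (volume T)⁻¹ • volume.restrict T)
    (f : EuclideanSpace ℝ (Fin n) → ℝ) (hf0 : ∀ x, 0 ≤ f x) (hfmeas : Measurable f)
    (hfdens : Measure.map (fun x => x - Q x) ν
        = volume.withDensity fun x => ENNReal.ofReal (f x))
    (hint : Integrable (fun x => f x * Real.logb 2 (f x)))
    (hHsum : Summable fun q : Set.range Q =>
      -(ν (Q ⁻¹' {(q : EuclideanSpace ℝ (Fin n))})).toReal
        * Real.logb 2 (ν (Q ⁻¹' {(q : EuclideanSpace ℝ (Fin n))})).toReal) :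
    (∑' q : Set.range Q,
        -(ν (Q ⁻¹' {(q : EuclideanSpace ℝ (Fin n))})).toReal
          * Real.logb 2 (ν (Q ⁻¹' {(q : EuclideanSpace ℝ (Fin n))})).toReal)
      - Real.logb 2 (volume T).toReal
      ≥ ∫ x, f x * Real.logb 2 (f x) := by
  classical
  have hμT0 : volume T ≠ 0 := hT0.ne'
  have hμTfin : volume T ≠ ⊤ := hTfin.ne
  set c : ENNReal := (volume T)⁻¹ with hcdef
  have hc0 : c ≠ 0 := ENNReal.inv_ne_zero.2 hμTfin
  have hcfin : c ≠ ⊤ := ENNReal.inv_ne_top.2 hμT0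
  set cr : ℝ := c.toReal with hcrdef
  have hcr0 : 0 < cr := ENNReal.toReal_pos hc0 hcfin
  set μTr : ℝ := (volume T).toReal with hμTrdef
  have hμTr0 : 0 < μTr := ENNReal.toReal_pos hμT0 hμTfin
  have hcrμ : cr * μTr = 1 := by
    rw [hcrdef, hμTrdef, hcdef, ENNReal.toReal_inv]
    exact inv_mul_cancel₀ hμTr0.ne'
  have hφm : Measurable (fun x : EuclideanSpace ℝ (Fin n) => x - Q x) :=
    measurable_id.sub hQmeas
  have hνuniv : ν Set.univ = 1 := by
    rw [hν]
    simp only [Measure.smul_apply, Measure.restrict_apply MeasurableSet.univ, Set.univ_inter,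
      smul_eq_mul]
    exact ENNReal.inv_mul_cancel hμT0 hμTfin
  have hlint1 : ∫⁻ x, ENNReal.ofReal (f x) = 1 := by
    have h := congrArg (fun μ : Measure (EuclideanSpace ℝ (Fin n)) => μ Set.univ) hfdens
    simp only [Measure.map_apply hφm MeasurableSet.univ, Set.preimage_univ, hνuniv,
      withDensity_apply _ MeasurableSet.univ, Measure.restrict_univ] at h
    exact h.symm
  have hfint : Integrable f := by
    refine ⟨hfmeas.aestronglyMeasurable, ?_⟩
    rw [hasFiniteIntegral_iff_norm]
    have he : ∀ x, ENNReal.ofReal ‖f x‖ = ENNReal.ofReal (f x) := fun x => by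
      rw [Real.norm_of_nonneg (hf0 x)]
    simp only [he, hlint1]
    exact ENNReal.one_lt_top
  have hfint1 : ∫ x, f x = 1 := by
    rw [integral_eq_lintegral_of_nonneg_ae (Filter.Eventually.of_forall hf0)
      hfmeas.aestronglyMeasurable, hlint1, ENNReal.toReal_one]
  set g : EuclideanSpace ℝ (Fin n) → ℝ := fun y => Real.logb 2 (f y) with hgdef
  have hgm : Measurable g := by
    simp only [hgdef, Real.logb]
    exact (Real.measurable_log.comp hfmeas).div_const _
  -- integrability of g wrt the error density measure
  have hgint_wd : Integrable g (volume.withDensity fun x => ENNReal.ofReal (f x)) := by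
    rw [integrable_withDensity_iff hfmeas.ennreal_ofReal
      (Filter.Eventually.of_forall fun x => ENNReal.ofReal_lt_top)]
    have he : (fun x => g x * (ENNReal.ofReal (f x)).toReal)
        = fun x => f x * Real.logb 2 (f x) := by
      funext x; rw [ENNReal.toReal_ofReal (hf0 x), mul_comm]
    rw [he]; exact hint
  have hgint_map : Integrable g (Measure.map (fun x => x - Q x) ν) := by
    rw [hfdens]; exact hgint_wd
  have hGint_ν : Integrable (fun x => g (x - Q x)) ν := by
    have h := hgint_map
    rw [integrable_map_measure hgint_map.aestronglyMeasurable hφm.aemeasurable] at h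
    exact h
  have hGintT : IntegrableOn (fun x => g (x - Q x)) T := by
    have h := hGint_ν
    rw [hν, integrable_smul_measure hc0 hcfin] at h
    exact h
  -- key identity
  have key1 : ∫ x, f x * Real.logb 2 (f x) = cr * ∫ x in T, g (x - Q x) := by
    have e1 : ∫ x, f x * Real.logb 2 (f x)
        = ∫ y, g y ∂(volume.withDensity fun x => ENNReal.ofReal (f x)) := by
      have hco : (fun x => ENNReal.ofReal (f x))
          = (fun x => ((f x).toNNReal : ENNReal)) := rfl
      rw [hco, integral_withDensity_eq_integral_smul hfmeas.real_toNNReal g]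
      refine integral_congr_ae (Filter.Eventually.of_forall fun x => ?_)
      show f x * Real.logb 2 (f x) = (f x).toNNReal • g x
      simp only [NNReal.smul_def, Real.coe_toNNReal _ (hf0 x), hgdef, smul_eq_mul]
    have e2 : ∫ y, g y ∂(volume.withDensity fun x => ENNReal.ofReal (f x))
        = ∫ x, g (x - Q x) ∂ν := by
      rw [← hfdens, integral_map hφm.aemeasurable hgint_map.aestronglyMeasurable]
    have e3 : ∫ x, g (x - Q x) ∂ν = cr * ∫ x in T, g (x - Q x) := by
      rw [hν, integral_smul_measure, smul_eq_mul]
    rw [e1, e2, e3]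
  -- the cells
  haveI : Countable (Set.range Q) := hQc.to_subtype
  set A : Set.range Q → Set (EuclideanSpace ℝ (Fin n)) :=
    fun q => T ∩ Q ⁻¹' {(q : EuclideanSpace ℝ (Fin n))} with hAdef
  have hAm : ∀ q, MeasurableSet (A q) :=
    fun q => hTm.inter (hQmeas (measurableSet_singleton _))
  have hAQ : ∀ q : Set.range Q, ∀ x ∈ A q, Q x = (q : EuclideanSpace ℝ (Fin n)) :=
    fun q x hx => hx.2
  have hAdisj : Pairwise (Function.onFun Disjoint A) := by
    intro q r hqr
    refine Set.disjoint_left.2 fun x hx hx' => ?_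
    exact hqr (Subtype.ext ((hAQ q x hx).symm.trans (hAQ r x hx')))
  have hAU : (⋃ q, A q) = T := by
    ext x
    simp only [Set.mem_iUnion]
    constructor
    · rintro ⟨q, hq⟩; exact hq.1
    · intro hx; exact ⟨⟨Q x, Set.mem_range_self x⟩, hx, rfl⟩
  have hSum1 : HasSum (fun q => ∫ x in A q, g (x - Q x)) (∫ x in T, g (x - Q x)) := by
    have h := hasSum_integral_iUnion (μ := volume) hAm hAdisj (by rw [hAU]; exact hGintT)
    rwa [hAU] at h
  -- translated cells
  set B : Set.range Q → Set (EuclideanSpace ℝ (Fin n)) :=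
    fun q => (fun x => x + (q : EuclideanSpace ℝ (Fin n))) ⁻¹' (A q) with hBdef
  have hBm : ∀ q, MeasurableSet (B q) := fun q => (measurable_add_const _) (hAm q)
  have hvolB : ∀ q, volume (B q) = volume (A q) :=
    fun q => measure_preimage_add_right _ _ _
  have hvolBfin : ∀ q, volume (B q) < ⊤ := fun q => by
    rw [hvolB]
    exact lt_of_le_of_lt (measure_mono Set.inter_subset_left) hTfin
  have hmemB : ∀ (q : Set.range Q) (x), x - (q : EuclideanSpace ℝ (Fin n)) ∈ B q ↔ x ∈ A q := by
    intro q x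
    simp only [hBdef, Set.mem_preimage, sub_add_cancel]
  -- indicator identity
  have hind : ∀ q : Set.range Q, (A q).indicator (fun x => g (x - (q : EuclideanSpace ℝ (Fin n))))
      = fun x => (B q).indicator g (x - (q : EuclideanSpace ℝ (Fin n))) := by
    intro q
    funext x
    by_cases hx : x ∈ A q
    · rw [Set.indicator_of_mem hx, Set.indicator_of_mem ((hmemB q x).2 hx)]
    · rw [Set.indicator_of_notMem hx,
        Set.indicator_of_notMem (fun h => hx ((hmemB q x).1 h))]
  have hAB_int : ∀ q : Set.range Q, ∫ x in A q, g (x - Q x) = ∫ y in B q, g y := by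
    intro q
    have e1 : ∫ x in A q, g (x - Q x)
        = ∫ x in A q, g (x - (q : EuclideanSpace ℝ (Fin n))) :=
      setIntegral_congr_fun (hAm q) fun x hx => by rw [hAQ q x hx]
    rw [e1, ← integral_indicator (hAm q), hind q,
      integral_sub_right_eq_self ((B q).indicator g) (q : EuclideanSpace ℝ (Fin n)),
      integral_indicator (hBm q)]
  have hgBint : ∀ q : Set.range Q, IntegrableOn g (B q) := by
    intro q
    have h1 : IntegrableOn (fun x => g (x - Q x)) (A q) :=
      hGintT.mono_set Set.inter_subset_left
    rw [← integrable_indicator_iff (hAm q)] at h1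
    have h2 : Integrable ((A q).indicator fun x => g (x - (q : EuclideanSpace ℝ (Fin n)))) := by
      refine h1.congr (Filter.Eventually.of_forall fun x => ?_)
      by_cases hx : x ∈ A q
      · rw [Set.indicator_of_mem hx, Set.indicator_of_mem hx, hAQ q x hx]
      · rw [Set.indicator_of_notMem hx, Set.indicator_of_notMem hx]
    rw [hind q] at h2
    have h3 : Integrable ((B q).indicator g) := by
      have h4 := h2.comp_sub_right (-(q : EuclideanSpace ℝ (Fin n)))
      simpa [sub_neg_eq_add, add_sub_cancel_right] using h4
    rwa [integrable_indicator_iff (hBm q)] at h3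
  -- a.e. lower bound for f on B q
  have hfge : ∀ q : Set.range Q, ∀ᵐ x ∂(volume.restrict (B q)), cr ≤ f x := by
    intro q
    have key : ∀ S : Set (EuclideanSpace ℝ (Fin n)), MeasurableSet S → S ⊆ B q →
        c * volume S ≤ ∫⁻ x in S, ENNReal.ofReal (f x) := by
      intro S hS hSB
      have h1 : (fun x => x - (q : EuclideanSpace ℝ (Fin n))) ⁻¹' S ⊆ A q := by
        intro x hx
        exact (hmemB q x).1 (hSB hx)
      have h2 : (fun x => x - (q : EuclideanSpace ℝ (Fin n))) ⁻¹' S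
          ⊆ (fun x => x - Q x) ⁻¹' S := by
        intro x hx
        have hQx : Q x = (q : EuclideanSpace ℝ (Fin n)) := hAQ q x (h1 hx)
        simpa only [Set.mem_preimage, hQx] using hx
      have hpre_meas : MeasurableSet ((fun x => x - (q : EuclideanSpace ℝ (Fin n))) ⁻¹' S) :=
        (measurable_sub_const _) hS
      calc c * volume S
          = c * volume ((fun x => x - (q : EuclideanSpace ℝ (Fin n))) ⁻¹' S) := by
            have : (fun x : EuclideanSpace ℝ (Fin n) => x - (q : EuclideanSpace ℝ (Fin n))) ⁻¹' S
                = (fun x => x + (-(q : EuclideanSpace ℝ (Fin n)))) ⁻¹' S := by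
              ext x; simp [sub_eq_add_neg]
            rw [this, measure_preimage_add_right]
        _ = ν ((fun x => x - (q : EuclideanSpace ℝ (Fin n))) ⁻¹' S) := by
            rw [hν, Measure.smul_apply, smul_eq_mul, Measure.restrict_apply hpre_meas,
              Set.inter_eq_self_of_subset_left (h1.trans Set.inter_subset_left)]
        _ ≤ ν ((fun x => x - Q x) ⁻¹' S) := measure_mono h2
        _ = ∫⁻ x in S, ENNReal.ofReal (f x) := by
            rw [← Measure.map_apply hφm hS, hfdens, withDensity_apply _ hS]
    have hint2 : Integrable (fun x => f x - cr) (volume.restrict (B q)) :=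
      hfint.restrict.sub (integrableOn_const (hvolBfin q).ne)
    have h0 : 0 ≤ᵐ[volume.restrict (B q)] fun x => f x - cr := by
      refine ae_nonneg_of_forall_setIntegral_nonneg hint2 fun s hs hsfin => ?_
      rw [Measure.restrict_restrict hs]
      have hSm : MeasurableSet (s ∩ B q) := hs.inter (hBm q)
      have hSB : s ∩ B q ⊆ B q := Set.inter_subset_right
      have hSfin : volume (s ∩ B q) < ⊤ := lt_of_le_of_lt (measure_mono hSB) (hvolBfin q)
      have hkey := key (s ∩ B q) hSm hSB
      have hle : cr * (volume (s ∩ B q)).toReal ≤ ∫ x in s ∩ B q, f x := by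
        have e1 : ∫ x in s ∩ B q, f x
            = (∫⁻ x in s ∩ B q, ENNReal.ofReal (f x)).toReal :=
          integral_eq_lintegral_of_nonneg_ae (Filter.Eventually.of_forall hf0)
            hfmeas.aestronglyMeasurable
        have hfinlint : ∫⁻ x in s ∩ B q, ENNReal.ofReal (f x) ≠ ⊤ := by
          refine ne_of_lt (lt_of_le_of_lt ?_ ENNReal.one_lt_top)
          rw [← hlint1]
          exact setLIntegral_le_lintegral _ _
        rw [e1, hcrdef, ← ENNReal.toReal_mul]
        exact ENNReal.toReal_mono hfinlint hkey
      rw [integral_sub hfint.restrict (integrableOn_const hSfin.ne),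
        setIntegral_const, smul_eq_mul, sub_nonneg]
      calc (volume (s ∩ B q)).toReal * cr = cr * (volume (s ∩ B q)).toReal := mul_comm _ _
        _ ≤ _ := hle
    refine h0.mono fun x hx => ?_
    simpa [sub_nonneg] using hx
  -- per-cell entropy bound
  have hgB_le : ∀ q : Set.range Q, ∫ y in B q, g y
      ≤ -(volume (B q)).toReal * Real.logb 2 (volume (B q)).toReal := by
    intro q
    by_cases hq0 : volume (B q) = 0
    · rw [Measure.restrict_eq_zero.2 hq0, integral_zero_measure, hq0]
      simp
    · have hv0 : 0 < (volume (B q)).toReal := ENNReal.toReal_pos hq0 (hvolBfin q).ne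
      set v : ℝ := (volume (B q)).toReal with hvdef
      have hlog2 : 0 < Real.log 2 := Real.log_pos one_lt_two
      have hae : ∀ᵐ x ∂(volume.restrict (B q)),
          g x ≤ Real.logb 2 v⁻¹ + (f x * v - 1) / Real.log 2 := by
        refine (hfge q).mono fun x hx => ?_
        have hfx : 0 < f x := lt_of_lt_of_le hcr0 hx
        have h1 : Real.log (f x * v) ≤ f x * v - 1 :=
          Real.log_le_sub_one_of_pos (mul_pos hfx hv0)
        have h2 : Real.log (f x) = Real.log v⁻¹ + Real.log (f x * v) := by
          rw [Real.log_mul hfx.ne' hv0.ne', Real.log_inv]; ring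
        show Real.logb 2 (f x) ≤ _
        rw [Real.logb, Real.logb, h2, add_div]
        gcongr
      have hconst : Integrable (fun _ : EuclideanSpace ℝ (Fin n) => Real.logb 2 v⁻¹)
          (volume.restrict (B q)) := integrableOn_const (hvolBfin q).ne
      have hone : Integrable (fun _ : EuclideanSpace ℝ (Fin n) => (1 : ℝ))
          (volume.restrict (B q)) := integrableOn_const (hvolBfin q).ne
      have hfv : Integrable (fun x => f x * v) (volume.restrict (B q)) :=
        hfint.restrict.mul_const v
      have hfv1 : Integrable (fun x => f x * v - 1) (volume.restrict (B q)) := by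
        exact hfv.sub hone
      have hfv2 : Integrable (fun x => (f x * v - 1) / Real.log 2)
          (volume.restrict (B q)) := by exact hfv1.div_const _
      have hintR : Integrable (fun x => Real.logb 2 v⁻¹ + (f x * v - 1) / Real.log 2)
          (volume.restrict (B q)) := hconst.add hfv2
      have hl := integral_mono_ae (hgBint q) hintR hae
      have h1 : ∫ x in B q, f x ≤ 1 := by
        rw [← hfint1]
        exact setIntegral_le_integral hfint (Filter.Eventually.of_forall hf0)
      have hRHS : ∫ x in B q, (Real.logb 2 v⁻¹ + (f x * v - 1) / Real.log 2)
          ≤ v * Real.logb 2 v⁻¹ := by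
        rw [integral_add hconst hfv2, setIntegral_const,
          integral_div, integral_sub hfv hone, integral_mul_const, setIntegral_const]
        simp only [smul_eq_mul, mul_one, measureReal_def, ← hvdef]
        have h2 : ((∫ x in B q, f x) * v - v) / Real.log 2 ≤ 0 := by
          apply div_nonpos_of_nonpos_of_nonneg _ hlog2.le
          nlinarith
        linarith
      calc ∫ y in B q, g y ≤ v * Real.logb 2 v⁻¹ := le_trans hl hRHS
        _ = -v * Real.logb 2 v := by rw [Real.logb_inv]; ring
  -- relation between cell measures
  have hνQ : ∀ q : Set.range Q,
      ν (Q ⁻¹' {(q : EuclideanSpace ℝ (Fin n))}) = c * volume (A q) := by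
    intro q
    rw [hν, Measure.smul_apply, smul_eq_mul,
      Measure.restrict_apply (hQmeas (measurableSet_singleton _))]
    simp only [hAdef]
    rw [Set.inter_comm]
  have hνQfin : ∀ q : Set.range Q, ν (Q ⁻¹' {(q : EuclideanSpace ℝ (Fin n))}) ≠ ⊤ := by
    intro q
    refine ne_of_lt (lt_of_le_of_lt (measure_mono (Set.subset_univ _)) ?_)
    rw [hνuniv]; exact ENNReal.one_lt_top
  have hpA : ∀ q : Set.range Q,
      (ν (Q ⁻¹' {(q : EuclideanSpace ℝ (Fin n))})).toReal = cr * (volume (B q)).toReal := by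
    intro q
    rw [hνQ q, ENNReal.toReal_mul, hvolB q, hcrdef]
  -- sum of probabilities is one
  have hpsum : HasSum (fun q : Set.range Q =>
      (ν (Q ⁻¹' {(q : EuclideanSpace ℝ (Fin n))})).toReal) 1 := by
    have hdisj : Pairwise (Function.onFun Disjoint
        (fun q : Set.range Q => Q ⁻¹' {(q : EuclideanSpace ℝ (Fin n))})) := by
      intro q r hqr
      refine Set.disjoint_left.2 fun x hx hx' => hqr (Subtype.ext ?_)
      have h1 : Q x = (q : EuclideanSpace ℝ (Fin n)) := hx
      have h2 : Q x = (r : EuclideanSpace ℝ (Fin n)) := hx'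
      exact h1.symm.trans h2
    have hU : (⋃ q : Set.range Q, Q ⁻¹' {(q : EuclideanSpace ℝ (Fin n))}) = Set.univ := by
      ext x
      simp only [Set.mem_iUnion, Set.mem_univ, iff_true]
      exact ⟨⟨Q x, Set.mem_range_self x⟩, rfl⟩
    have hmeasU : ∑' q : Set.range Q, ν (Q ⁻¹' {(q : EuclideanSpace ℝ (Fin n))}) = 1 := by
      rw [← measure_iUnion hdisj (fun q => hQmeas (measurableSet_singleton _)), hU, hνuniv]
    have hsummable : Summable (fun q : Set.range Q =>
        (ν (Q ⁻¹' {(q : EuclideanSpace ℝ (Fin n))})).toReal) :=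
      ENNReal.summable_toReal (by rw [hmeasU]; exact ENNReal.one_ne_top)
    have htsum : ∑' q : Set.range Q,
        (ν (Q ⁻¹' {(q : EuclideanSpace ℝ (Fin n))})).toReal = 1 := by
      rw [← ENNReal.tsum_toReal_eq hνQfin, hmeasU, ENNReal.toReal_one]
    exact htsum ▸ hsummable.hasSum
  -- assemble
  have hu : HasSum (fun q : Set.range Q => cr * ∫ x in A q, g (x - Q x))
      (∫ x, f x * Real.logb 2 (f x)) := by
    rw [key1]; exact hSum1.mul_left cr
  have hterm : ∀ q : Set.range Q, cr * ∫ x in A q, g (x - Q x)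
      ≤ -(ν (Q ⁻¹' {(q : EuclideanSpace ℝ (Fin n))})).toReal
          * Real.logb 2 (ν (Q ⁻¹' {(q : EuclideanSpace ℝ (Fin n))})).toReal
        - (ν (Q ⁻¹' {(q : EuclideanSpace ℝ (Fin n))})).toReal * Real.logb 2 μTr := by
    intro q
    rw [hAB_int q]
    have h2 : cr * ∫ y in B q, g y
        ≤ cr * (-(volume (B q)).toReal * Real.logb 2 (volume (B q)).toReal) :=
      mul_le_mul_of_nonneg_left (hgB_le q) hcr0.le
    refine le_trans h2 (le_of_eq ?_)
    set p : ℝ := (ν (Q ⁻¹' {(q : EuclideanSpace ℝ (Fin n))})).toReal with hpdef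
    set v : ℝ := (volume (B q)).toReal with hvdef
    have hpv : p = cr * v := hpA q
    by_cases hv : v = 0
    · rw [hpv, hv]; simp
    · have hvpos : 0 < v := lt_of_le_of_ne ENNReal.toReal_nonneg (Ne.symm hv)
      have hppos : 0 < p := by rw [hpv]; positivity
      have hvp : v = μTr * p := by
        rw [hpv, ← mul_assoc, mul_comm μTr cr, hcrμ, one_mul]
      rw [hvp, Real.logb_mul hμTr0.ne' hppos.ne']
      have he : cr * (-(μTr * p) * (Real.logb 2 μTr + Real.logb 2 p))
          = -(cr * μTr) * p * (Real.logb 2 μTr + Real.logb 2 p) := by ring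
      rw [he, hcrμ]
      ring
  have hs_sum : HasSum (fun q : Set.range Q =>
      (ν (Q ⁻¹' {(q : EuclideanSpace ℝ (Fin n))})).toReal * Real.logb 2 μTr)
      (Real.logb 2 μTr) := by
    simpa using hpsum.mul_right (Real.logb 2 μTr)
  have hts : Summable (fun q : Set.range Q =>
      -(ν (Q ⁻¹' {(q : EuclideanSpace ℝ (Fin n))})).toReal
          * Real.logb 2 (ν (Q ⁻¹' {(q : EuclideanSpace ℝ (Fin n))})).toReal
        - (ν (Q ⁻¹' {(q : EuclideanSpace ℝ (Fin n))})).toReal * Real.logb 2 μTr) :=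
    hHsum.sub hs_sum.summable
  have hfinal := Summable.tsum_le_tsum hterm hu.summable hts
  rw [hu.tsum_eq, Summable.tsum_sub hHsum hs_sum.summable, hs_sum.tsum_eq] at hfinal
  exact hfinal
end

section
/- Let G ∈ ℝ^{n×n} be invertible, let f : ℝⁿ → [0,∞) be a probability density satisfying the Nyquist-G condition Σ_{v ∈ ℤⁿ} f(t + Gv) = 1/|det G| for all t ∈ ℝⁿ, and let Q : ℝⁿ → ℝⁿ be measurable with Q(x + Gv) = Q(x) + Gv for all x ∈ ℝⁿ, v ∈ ℤⁿ. If X ~ f, then for every measurable A ⊆ ℝⁿ, P(X − Q(X) ∈ A) = ∫_{[0,1)ⁿ} 1{Gu − Q(Gu) ∈ A} du. In particular, the distribution of the error X − Q(X) does not depend on the choice of the Nyquist-G density f. -/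
open MeasureTheory Matrix ENNReal

/-- For an invertible `G`, a Nyquist-`G` density `f`, and a shift-periodic quantizer `Q`,
if `X ~ f` then for every measurable `A`,
`P(X − Q(X) ∈ A) = ∫_{[0,1)ⁿ} 1{Gu − Q(Gu) ∈ A} du`. -/
theorem stmt_11 (n : ℕ) (G : Matrix (Fin n) (Fin n) ℝ) (hG : IsUnit G.det)
    (f : (Fin n → ℝ) → ℝ) (hf0 : ∀ x, 0 ≤ f x) (hfmeas : Measurable f)
    (hfdens : ∫ x, f x = 1)
    (hNyq : ∀ t : Fin n → ℝ,
      ∑' v : Fin n → ℤ, f (t + G.mulVec fun i => (v i : ℝ)) = 1 / |G.det|)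
    (Q : (Fin n → ℝ) → (Fin n → ℝ)) (hQmeas : Measurable Q)
    (hQshift : ∀ (x : Fin n → ℝ) (v : Fin n → ℤ),
      Q (x + G.mulVec fun i => (v i : ℝ)) = Q x + G.mulVec fun i => (v i : ℝ))
    (A : Set (Fin n → ℝ)) (hA : MeasurableSet A) :
    ∫ x, A.indicator (fun _ => (1 : ℝ)) (x - Q x) * f x
      = ∫ u in {u : Fin n → ℝ | ∀ i, 0 ≤ u i ∧ u i < 1},
          A.indicator (fun _ => (1 : ℝ)) (G.mulVec u - Q (G.mulVec u)) := by
  classical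
  have hdet : G.det ≠ 0 := hG.ne_zero
  have hInv : Invertible G := G.invertibleOfIsUnitDet hG
  set e : (Fin n → ℝ) ≃ₗ[ℝ] (Fin n → ℝ) := G.toLinearEquiv' hInv with hedef
  set b : Module.Basis (Fin n) ℝ (Fin n → ℝ) := (Pi.basisFun ℝ (Fin n)).map e with hbdef
  have he : ∀ u, e u = G.mulVec u := fun u => rfl
  set D := ZSpan.fundamentalDomain b with hDdef
  set S : Set (Fin n → ℝ) := {u : Fin n → ℝ | ∀ i, 0 ≤ u i ∧ u i < 1} with hSdef
  set I : (Fin n → ℝ) → ℝ≥0∞ := fun y => A.indicator (fun _ => (1 : ℝ≥0∞)) y with hIdef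
  have hImeas : Measurable I := measurable_const.indicator hA
  have hsub : Measurable fun x : Fin n → ℝ => x - Q x := measurable_id.sub hQmeas
  have hJmeas : Measurable fun x => I (x - Q x) := hImeas.comp hsub
  have hofI : ∀ y, ENNReal.ofReal (A.indicator (fun _ => (1:ℝ)) y) = I y := by
    intro y; by_cases hy : y ∈ A <;> simp [hIdef, hy]
  -- preimage of the fundamental domain under G
  have hpre : (⇑e) ⁻¹' D = S := by
    ext u
    simp [hDdef, ZSpan.fundamentalDomain, hbdef, Module.Basis.map_repr, hSdef]
  -- elements of the lattice
  have hψ : ∀ v : Fin n → ℤ,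
      (((b.restrictScalars ℤ).equivFun.toEquiv.symm v :
        Submodule.span ℤ (Set.range ⇑b)) : Fin n → ℝ)
        = G.mulVec fun i => (v i : ℝ) := by
    intro v
    show (((b.restrictScalars ℤ).equivFun.symm v :
        Submodule.span ℤ (Set.range ⇑b)) : Fin n → ℝ) = _
    rw [Module.Basis.equivFun_symm_apply]
    push_cast [AddSubmonoidClass.coe_finset_sum]
    simp only [Module.Basis.restrictScalars_apply]
    ext j
    have hbij : ∀ i, b i j = G j i := by
      intro i
      simp [hbdef, Module.Basis.map_apply, he, Matrix.mulVec, dotProduct, Pi.single_apply]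
    simp only [Finset.sum_apply, Pi.smul_apply, Matrix.mulVec, dotProduct]
    refine Finset.sum_congr rfl fun i _ => ?_
    rw [hbij i, zsmul_eq_mul, mul_comm]
  -- Nyquist condition in ℝ≥0∞
  have hNyqE : ∀ t : Fin n → ℝ,
      (∑' v : Fin n → ℤ, ENNReal.ofReal (f (t + G.mulVec fun i => (v i : ℝ))))
        = ENNReal.ofReal (1 / |G.det|) := by
    intro t
    have hsum : Summable fun v : Fin n → ℤ => f (t + G.mulVec fun i => (v i : ℝ)) := by
      by_contra h
      have := hNyq t
      rw [tsum_eq_zero_of_not_summable h] at this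
      exact (one_div_ne_zero (abs_ne_zero.mpr hdet)) this.symm
    rw [← ENNReal.ofReal_tsum_of_nonneg (fun v => hf0 _) hsum, hNyq t]
  -- main lintegral computation
  have hTmeas : Measurable (⇑e) :=
    e.toLinearMap.continuous_of_finiteDimensional.measurable
  have hDmeas : MeasurableSet D := ZSpan.fundamentalDomain_measurableSet b
  have hshiftJ : ∀ (x : Fin n → ℝ) (v : Fin n → ℤ),
      ((G.mulVec fun i => (v i : ℝ)) + x) - Q ((G.mulVec fun i => (v i : ℝ)) + x)
        = x - Q x := by
    intro x v
    rw [add_comm, hQshift x v]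
    abel
  have hmain : (∫⁻ x, I (x - Q x) * ENNReal.ofReal (f x))
      = ∫⁻ u in S, I (G.mulVec u - Q (G.mulVec u)) := by
    haveI : MeasurableVAdd (↥(Submodule.span ℤ (Set.range ⇑b))) (Fin n → ℝ) := by
      constructor
      · intro x
        exact (measurable_subtype_coe).add_const x
    haveI : VAddInvariantMeasure (↥(Submodule.span ℤ (Set.range ⇑b))) (Fin n → ℝ) volume := by
      constructor
      intro g s hs
      exact measure_preimage_add volume (↑g) s
    have hfund := ZSpan.isAddFundamentalDomain b (volume : Measure (Fin n → ℝ))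
    have h1 := hfund.lintegral_eq_tsum'' (fun x => I (x - Q x) * ENNReal.ofReal (f x))
    have h2 : (∑' g : Submodule.span ℤ (Set.range ⇑b),
          ∫⁻ x in D, I ((g +ᵥ x) - Q (g +ᵥ x)) * ENNReal.ofReal (f (g +ᵥ x)))
        = ∑' v : Fin n → ℤ, ∫⁻ x in D,
            I (x - Q x) * ENNReal.ofReal (f (x + G.mulVec fun i => (v i : ℝ))) := by
      rw [← Equiv.tsum_eq (b.restrictScalars ℤ).equivFun.toEquiv.symm]
      refine tsum_congr fun v => ?_
      refine lintegral_congr fun x => ?_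
      have hva : ((b.restrictScalars ℤ).equivFun.toEquiv.symm v : Submodule.span ℤ (Set.range ⇑b))
          +ᵥ x = (G.mulVec fun i => (v i : ℝ)) + x := by
        rw [← hψ v]; rfl
      rw [hva, hshiftJ x v, add_comm]
    have h3 : ∀ v : Fin n → ℤ, AEMeasurable
        (fun x => I (x - Q x) * ENNReal.ofReal (f (x + G.mulVec fun i => (v i : ℝ))))
        ((volume : Measure (Fin n → ℝ)).restrict D) := by
      intro v
      exact (hJmeas.mul ((ENNReal.measurable_ofReal.comp hfmeas).comp
        (measurable_id.add_const _))).aemeasurable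
    have h4 : (∑' v : Fin n → ℤ, ∫⁻ x in D,
          I (x - Q x) * ENNReal.ofReal (f (x + G.mulVec fun i => (v i : ℝ))))
        = ∫⁻ x in D, I (x - Q x) * ENNReal.ofReal (1 / |G.det|) := by
      rw [← lintegral_tsum h3]
      refine lintegral_congr fun x => ?_
      rw [ENNReal.tsum_mul_left, hNyqE x]
    have h5 : ∫⁻ x in D, I (x - Q x) ∂(Measure.map (⇑e) volume)
        = ∫⁻ u in S, I (G.mulVec u - Q (G.mulVec u)) := by
      rw [Measure.restrict_map hTmeas hDmeas, lintegral_map hJmeas hTmeas, hpre]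
      rfl
    have hmapvol : Measure.map (⇑e) (volume : Measure (Fin n → ℝ))
        = ENNReal.ofReal |G.det⁻¹| • volume := by
      have h := Real.map_matrix_volume_pi_eq_smul_volume_pi hdet
      have : ⇑e = ⇑(Matrix.toLin' G) := rfl
      rw [this, h]
    have h6 : ∫⁻ u in S, I (G.mulVec u - Q (G.mulVec u))
        = ENNReal.ofReal |G.det⁻¹| * ∫⁻ x in D, I (x - Q x) := by
      rw [← h5, hmapvol]
      simp [Measure.restrict_smul, lintegral_smul_measure]
    rw [h1, h2, h4, lintegral_mul_const _ hJmeas, h6]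
    rw [mul_comm]
    congr 1
    rw [one_div, ← abs_inv]
  -- convert Bochner integrals to lower integrals
  have hnnL : 0 ≤ᵐ[volume] fun x => A.indicator (fun _ => (1:ℝ)) (x - Q x) * f x :=
    Filter.Eventually.of_forall fun x =>
      mul_nonneg (Set.indicator_nonneg (fun _ _ => zero_le_one) _) (hf0 x)
  have hmL : AEStronglyMeasurable
      (fun x => A.indicator (fun _ => (1:ℝ)) (x - Q x) * f x) volume :=
    (((measurable_const.indicator hA).comp hsub).mul hfmeas).aestronglyMeasurable
  have hnnR : 0 ≤ᵐ[volume.restrict S]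
      fun u => A.indicator (fun _ => (1:ℝ)) (G.mulVec u - Q (G.mulVec u)) :=
    Filter.Eventually.of_forall fun u =>
      Set.indicator_nonneg (fun _ _ => zero_le_one) _
  have hGm : Measurable fun u : Fin n → ℝ => G.mulVec u := hTmeas
  have hmR : AEStronglyMeasurable
      (fun u => A.indicator (fun _ => (1:ℝ)) (G.mulVec u - Q (G.mulVec u)))
      (volume.restrict S) :=
    ((measurable_const.indicator hA).comp
      ((hGm.sub (hQmeas.comp hGm)))).aestronglyMeasurable
  rw [integral_eq_lintegral_of_nonneg_ae hnnL hmL,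
    integral_eq_lintegral_of_nonneg_ae hnnR hmR]
  congr 1
  calc ∫⁻ x, ENNReal.ofReal (A.indicator (fun _ => (1:ℝ)) (x - Q x) * f x)
      = ∫⁻ x, I (x - Q x) * ENNReal.ofReal (f x) := by
        refine lintegral_congr fun x => ?_
        rw [ENNReal.ofReal_mul (Set.indicator_nonneg (fun _ _ => zero_le_one) _), hofI]
    _ = ∫⁻ u in S, I (G.mulVec u - Q (G.mulVec u)) := hmain
    _ = ∫⁻ u in S, ENNReal.ofReal
          (A.indicator (fun _ => (1:ℝ)) (G.mulVec u - Q (G.mulVec u))) :=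
        lintegral_congr fun u => (hofI _).symm
end

section
/- Let A ⊆ ℝⁿ be a bounded convex set with A ⊆ r·Bₙ for some r > 0. Then μ(A ⊖ [0,1)ⁿ) ≥ μ(A) − n·r^{n−1}·ν_{n−1}, where A ⊖ B = {x : B + x ⊆ A} is the erosion and ν_{n−1} = π^{(n−1)/2}/Γ((n+1)/2) is the volume of the unit (n−1)-ball. -/
open MeasureTheory Set Metric
open scoped ENNReal NNReal

lemma abs_apply_le_norm {k : ℕ} (x : EuclideanSpace ℝ (Fin k)) (j : Fin k) : |x j| ≤ ‖x‖ := by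
  rw [EuclideanSpace.norm_eq]
  have h1 : |x j| = Real.sqrt (‖x j‖ ^ 2) := by
    rw [Real.sqrt_sq_eq_abs, Real.norm_eq_abs, abs_abs]
  rw [h1]
  exact Real.sqrt_le_sqrt (Finset.single_le_sum (f := fun i => ‖x i‖ ^ 2)
    (fun i _ => sq_nonneg _) (Finset.mem_univ j))

lemma erosion_step {m : ℕ} {r : ℝ} (hr : 0 ≤ r) {C : Set (EuclideanSpace ℝ (Fin (m+1)))}
    (hC : Convex ℝ C) (hcls : IsClosed C)
    (hCb : C ⊆ Metric.closedBall 0 r) (i : Fin (m+1)) :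
    volume C ≤ volume {x : EuclideanSpace ℝ (Fin (m+1)) |
        ∀ s ∈ Set.Icc (0:ℝ) 1, x + s • EuclideanSpace.single i (1:ℝ) ∈ C}
      + ENNReal.ofReal (r ^ m) * volume (Metric.closedBall (0 : EuclideanSpace ℝ (Fin m)) 1) := by
  classical
  set v : EuclideanSpace ℝ (Fin (m + 1)) := EuclideanSpace.single i (1:ℝ) with hv
  set E : Set (EuclideanSpace ℝ (Fin (m+1))) :=
    {x | ∀ s ∈ Set.Icc (0:ℝ) 1, x + s • v ∈ C} with hE
  have hEcl : IsClosed E := by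
    have h : E = ⋂ s ∈ Set.Icc (0:ℝ) 1, (fun x => x + s • v) ⁻¹' C := by
      ext x; simp [hE]
    rw [h]
    exact isClosed_biInter fun s _ => hcls.preimage (continuous_add_right _)
  have mpF : MeasurePreserving
      (⇑(MeasurableEquiv.piFinSuccAbove (fun _ : Fin (m+1) => ℝ) i) ∘
        ⇑((MeasurableEquiv.toLp 2 (Fin (m+1) → ℝ)).symm)) volume volume :=
    (volume_preserving_piFinSuccAbove (fun _ : Fin (m+1) => ℝ) i).comp
      (EuclideanSpace.volume_preserving_symm_measurableEquiv_toLp (Fin (m+1)))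
  set G : ℝ × (Fin m → ℝ) → EuclideanSpace ℝ (Fin (m+1)) := fun p =>
    ((MeasurableEquiv.toLp 2 (Fin (m+1) → ℝ)).symm).symm
      ((MeasurableEquiv.piFinSuccAbove (fun _ : Fin (m+1) => ℝ) i).symm p) with hG
  have mG : Measurable G :=
    ((MeasurableEquiv.toLp 2 (Fin (m+1) → ℝ)).symm).symm.measurable.comp
      (MeasurableEquiv.piFinSuccAbove (fun _ : Fin (m+1) => ℝ) i).symm.measurable
  have hGF : ∀ x, G ((MeasurableEquiv.piFinSuccAbove (fun _ : Fin (m+1) => ℝ) i)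
      (((MeasurableEquiv.toLp 2 (Fin (m+1) → ℝ)).symm) x)) = x := by
    intro x; simp [hG, Fin.insertNthEquiv, Fin.insertNth_self_removeNth]
  have hGco : ∀ p : ℝ × (Fin m → ℝ), ∀ j, G p j = Fin.insertNth (α := fun _ => ℝ) i p.1 p.2 j :=
    fun p j => rfl
  -- additivity
  have hgadd : ∀ (w : Fin m → ℝ) (t s : ℝ), G (t + s, w) = G (t, w) + s • v := by
    intro w t s
    ext j
    have hj : (G (t, w) + s • v) j = G (t, w) j + s * v j := rfl
    rw [hj, hGco, hGco, hv]
    rcases eq_or_ne j i with rfl | hne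
    · rw [Fin.insertNth_apply_same, Fin.insertNth_apply_same, EuclideanSpace.single_apply]
      simp
    · obtain ⟨j', rfl⟩ := Fin.exists_succAbove_eq hne
      rw [Fin.insertNth_apply_succAbove, Fin.insertNth_apply_succAbove,
        EuclideanSpace.single_apply]
      simp [Fin.succAbove_ne i j']
  -- fibers
  have volS : ∀ S : Set (EuclideanSpace ℝ (Fin (m+1))), MeasurableSet S →
      volume S = ∫⁻ w : Fin m → ℝ, volume {t : ℝ | G (t, w) ∈ S} := by
    intro S hS
    have h1 : (⇑(MeasurableEquiv.piFinSuccAbove (fun _ : Fin (m+1) => ℝ) i) ∘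
        ⇑((MeasurableEquiv.toLp 2 (Fin (m+1) → ℝ)).symm)) ⁻¹' (G ⁻¹' S) = S := by
      ext x
      simp only [Set.mem_preimage, Function.comp_apply, hGF]
    have h2 := mpF.measure_preimage ((mG hS).nullMeasurableSet)
    rw [h1] at h2
    rw [h2, Measure.volume_eq_prod, Measure.prod_apply_symm (mG hS)]
    rfl
  -- projection
  set P : Set (Fin m → ℝ) :=
    (fun x : EuclideanSpace ℝ (Fin (m+1)) => fun j => x (i.succAbove j)) '' C with hP
  have hCcomp : IsCompact C := (isCompact_closedBall _ _).of_isClosed_subset hcls hCb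
  have hPcomp : IsCompact P := hCcomp.image (by
    apply continuous_pi; intro j
    exact (EuclideanSpace.proj (i.succAbove j)).continuous)
  have hPm : MeasurableSet P := hPcomp.isClosed.measurableSet
  -- pointwise fiber bound
  have fiber_bound : ∀ w : Fin m → ℝ,
      volume {t : ℝ | G (t, w) ∈ C}
        ≤ volume {t : ℝ | G (t, w) ∈ E} + P.indicator (fun _ => (1:ℝ≥0∞)) w := by
    intro w
    by_cases hne : {t : ℝ | G (t, w) ∈ C}.Nonempty
    · obtain ⟨t₀, ht₀⟩ := hne
      have hwP : w ∈ P := by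
        refine ⟨G (t₀, w), ht₀, ?_⟩
        funext j
        show G (t₀, w) (i.succAbove j) = w j
        rw [hGco]
        exact Fin.insertNth_apply_succAbove i _ _ _
      have hlin : ∀ t : ℝ, G (t, w) = G (0, w) + t • v := by
        intro t
        have := hgadd w 0 t
        rwa [zero_add] at this
      set I : Set ℝ := {t : ℝ | G (t, w) ∈ C} with hI
      have hpt : ∀ t : ℝ, (AffineMap.lineMap (G (0, w)) (G (0, w) + v) :
          ℝ →ᵃ[ℝ] EuclideanSpace ℝ (Fin (m+1))) t = G (t, w) := by
        intro t
        rw [AffineMap.lineMap_apply, hlin t, vadd_eq_add, vsub_eq_sub, add_sub_cancel_left]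
        exact add_comm _ _
      have hIpre : I = (AffineMap.lineMap (G (0, w)) (G (0, w) + v) :
          ℝ →ᵃ[ℝ] EuclideanSpace ℝ (Fin (m+1))) ⁻¹' C := by
        ext t; simp only [hI, Set.mem_setOf_eq, Set.mem_preimage, hpt]
      have hIconv : Convex ℝ I := by
        rw [hIpre]; exact hC.affine_preimage _
      have hIcl : IsClosed I := by
        rw [hIpre]
        exact hcls.preimage (AffineMap.lineMap_continuous)
      have hIsub : I ⊆ Set.Icc (-r) r := by
        intro t ht
        have h1 : G (t, w) i = t := by rw [hGco]; exact Fin.insertNth_apply_same i _ _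
        have h2 : ‖G (t, w)‖ ≤ r := by
          have := hCb ht
          rwa [Metric.mem_closedBall, dist_zero_right] at this
        have := (abs_apply_le_norm (G (t, w)) i).trans h2
        rw [h1] at this
        exact abs_le.mp this
      have hIcomp : IsCompact I := isCompact_Icc.of_isClosed_subset hIcl hIsub
      have hIcc : I = Set.Icc (sInf I) (sSup I) :=
        eq_Icc_of_connected_compact ⟨⟨t₀, ht₀⟩, hIconv.isPreconnected⟩ hIcomp
      set a := sInf I
      set b := sSup I
      have hEfib : Set.Icc a (b - 1) ⊆ {t : ℝ | G (t, w) ∈ E} := by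
        intro t ht
        simp only [Set.mem_setOf_eq, hE]
        intro s hs
        rw [← hgadd]
        have : t + s ∈ I := by
          rw [hIcc]
          exact ⟨le_add_of_le_of_nonneg ht.1 hs.1, by linarith [ht.2, hs.2]⟩
        exact this
      have hvolI : volume I = ENNReal.ofReal (b - a) := by
        rw [hIcc, Real.volume_Icc]
      rw [hvolI, Set.indicator_of_mem hwP]
      calc ENNReal.ofReal (b - a) = ENNReal.ofReal ((b - 1 - a) + 1) := by ring_nf
        _ ≤ ENNReal.ofReal (b - 1 - a) + ENNReal.ofReal 1 := ENNReal.ofReal_add_le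
        _ ≤ volume {t : ℝ | G (t, w) ∈ E} + 1 := by
            rw [ENNReal.ofReal_one]
            gcongr
            calc ENNReal.ofReal (b - 1 - a) = volume (Set.Icc a (b-1)) := by
                  rw [Real.volume_Icc]
              _ ≤ volume {t : ℝ | G (t, w) ∈ E} := measure_mono hEfib
    · rw [Set.not_nonempty_iff_eq_empty.mp hne]
      simp
  -- volume of projection
  have hPvol : volume P ≤ ENNReal.ofReal (r ^ m)
      * volume (Metric.closedBall (0 : EuclideanSpace ℝ (Fin m)) 1) := by
    have hPsub : P ⊆ ⇑((MeasurableEquiv.toLp 2 (Fin m → ℝ)).symm) ''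
        Metric.closedBall (0 : EuclideanSpace ℝ (Fin m)) r := by
      rintro w ⟨x, hx, rfl⟩
      refine ⟨((MeasurableEquiv.toLp 2 (Fin m → ℝ)).symm).symm (fun j => x (i.succAbove j)), ?_, by
        simp⟩
      rw [Metric.mem_closedBall, dist_zero_right]
      have hco : ∀ j, (((MeasurableEquiv.toLp 2 (Fin m → ℝ)).symm).symm
          (fun j => x (i.succAbove j))) j = x (i.succAbove j) := fun j => rfl
      rw [EuclideanSpace.norm_eq]
      have hxnorm : ‖x‖ ≤ r := by
        have := hCb hx
        rwa [Metric.mem_closedBall, dist_zero_right] at this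
      have hsum : ∑ j : Fin m, ‖(((MeasurableEquiv.toLp 2 (Fin m → ℝ)).symm).symm
            (fun j => x (i.succAbove j))) j‖ ^ 2 ≤ ∑ k : Fin (m+1), ‖x k‖ ^ 2 := by
        simp_rw [hco]
        have hsub := Finset.sum_le_sum_of_subset_of_nonneg
          (Finset.subset_univ (Finset.univ.map (i.succAboveEmb)))
          (fun k _ _ => sq_nonneg ‖x k‖)
        rwa [Finset.sum_map] at hsub
      calc Real.sqrt (∑ j, ‖(((MeasurableEquiv.toLp 2 (Fin m → ℝ)).symm).symm
            (fun j => x (i.succAbove j))) j‖ ^ 2)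
          ≤ Real.sqrt (∑ k : Fin (m+1), ‖x k‖ ^ 2) := Real.sqrt_le_sqrt hsum
        _ = ‖x‖ := (EuclideanSpace.norm_eq x).symm
        _ ≤ r := hxnorm
    have himg : volume (⇑((MeasurableEquiv.toLp 2 (Fin m → ℝ)).symm) ''
        Metric.closedBall (0 : EuclideanSpace ℝ (Fin m)) r)
        = volume (Metric.closedBall (0 : EuclideanSpace ℝ (Fin m)) r) := by
      rw [MeasurableEquiv.image_eq_preimage_symm]
      exact ((EuclideanSpace.volume_preserving_symm_measurableEquiv_toLp (Fin m)).symm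
        ((MeasurableEquiv.toLp 2 (Fin m → ℝ)).symm)).measure_preimage
        measurableSet_closedBall.nullMeasurableSet
    calc volume P ≤ volume (⇑((MeasurableEquiv.toLp 2 (Fin m → ℝ)).symm) ''
          Metric.closedBall (0 : EuclideanSpace ℝ (Fin m)) r) := measure_mono hPsub
      _ = volume (Metric.closedBall (0 : EuclideanSpace ℝ (Fin m)) r) := himg
      _ = ENNReal.ofReal (r ^ m)
          * volume (Metric.closedBall (0 : EuclideanSpace ℝ (Fin m)) 1) := by
          rw [Measure.addHaar_closedBall' volume _ hr]
          congr 2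
          simp [finrank_euclideanSpace_fin]
  -- put together
  calc volume C = ∫⁻ w, volume {t : ℝ | G (t, w) ∈ C} := volS C hcls.measurableSet
    _ ≤ ∫⁻ w, (volume {t : ℝ | G (t, w) ∈ E} + P.indicator (fun _ => (1:ℝ≥0∞)) w) :=
        lintegral_mono fiber_bound
    _ = (∫⁻ w, volume {t : ℝ | G (t, w) ∈ E}) + ∫⁻ w, P.indicator (fun _ => (1:ℝ≥0∞)) w :=
        lintegral_add_right _ (measurable_one.indicator hPm)
    _ = volume E + volume P := by
        rw [← volS E hEcl.measurableSet]
        congr 1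
        exact lintegral_indicator_one hPm
    _ ≤ volume E + ENNReal.ofReal (r ^ m)
        * volume (Metric.closedBall (0 : EuclideanSpace ℝ (Fin m)) 1) := by gcongr

lemma convex_interior_closure_subset {E : Type*} [NormedAddCommGroup E] [NormedSpace ℝ E]
    {A : Set E} (hA : Convex ℝ A) {x₀ : E} (hx₀ : x₀ ∈ interior A) :
    interior (closure A) ⊆ A := by
  intro y hy
  obtain ⟨ε, hε, hball⟩ := Metric.mem_nhds_iff.mp (mem_interior_iff_mem_nhds.mp hy)
  set t : ℝ := ε / (2 * (‖y - x₀‖ + 1)) with ht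
  have hnorm1 : (0:ℝ) < ‖y - x₀‖ + 1 := by positivity
  have htpos : 0 < t := by positivity
  set z : E := y + t • (y - x₀) with hz
  have hzball : z ∈ Metric.ball y ε := by
    rw [Metric.mem_ball, dist_eq_norm]
    have : z - y = t • (y - x₀) := by rw [hz]; abel
    rw [this, norm_smul, Real.norm_eq_abs, abs_of_pos htpos]
    calc t * ‖y - x₀‖ = ε / 2 * (‖y - x₀‖ / (‖y - x₀‖ + 1)) := by
          rw [ht]; field_simp
      _ < ε := by
          have h2 : ‖y - x₀‖ / (‖y - x₀‖ + 1) < 1 := by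
            rw [div_lt_one hnorm1]; linarith
          nlinarith
  have hzcl : z ∈ closure A := hball hzball
  have h1t : (0:ℝ) < 1 + t := by linarith
  have h1t' : (1:ℝ) + t ≠ 0 := by linarith
  have key : (t / (1 + t)) • x₀ + (1 / (1 + t)) • z = y := by
    rw [hz]
    match_scalars <;> field_simp <;> ring
  have := hA.combo_interior_closure_mem_interior (a := t / (1 + t)) (b := 1 / (1 + t)) hx₀ hzcl
    (div_pos htpos h1t) (by positivity) (by field_simp; ring)
  rw [key] at this
  exact interior_subset this

/-- For a bounded convex `A ⊆ r·Bₙ`, the erosion of `A` by the unit cube `[0,1)ⁿ`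
satisfies `μ(A ⊖ [0,1)ⁿ) ≥ μ(A) − n·r^{n−1}·ν_{n−1}`, where `ν_{n−1}` is the volume of
the unit `(n−1)`-ball. -/
theorem stmt_12 (n : ℕ) (hn : 1 ≤ n) (A : Set (EuclideanSpace ℝ (Fin n))) (r : ℝ)
    (hconv : Convex ℝ A) (hr : 0 < r)
    (hAr : A ⊆ Metric.closedBall (0 : EuclideanSpace ℝ (Fin n)) r) :
    (volume A).toReal
        - n * r ^ (n - 1)
          * (volume (Metric.closedBall (0 : EuclideanSpace ℝ (Fin (n - 1))) 1)).toReal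
      ≤ (volume {x : EuclideanSpace ℝ (Fin n) |
          ∀ y : EuclideanSpace ℝ (Fin n), (∀ i, 0 ≤ y i ∧ y i < 1) → y + x ∈ A}).toReal := by
  obtain ⟨m, rfl⟩ : ∃ m, n = m + 1 := ⟨n - 1, (Nat.succ_pred_eq_of_pos hn).symm⟩
  classical
  set K := closure A with hK
  have hKconv : Convex ℝ K := hconv.closure
  have hKcl : IsClosed K := isClosed_closure
  have hKb : K ⊆ Metric.closedBall 0 r := closure_minimal hAr Metric.isClosed_closedBall
  set ν : ℝ≥0∞ := volume (Metric.closedBall (0 : EuclideanSpace ℝ (Fin m)) 1) with hν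
  set c : ℝ≥0∞ := ENNReal.ofReal (r ^ m) * ν with hc
  set Q : ℕ → Set (EuclideanSpace ℝ (Fin (m+1))) := fun k =>
    {y | ∀ i : Fin (m+1), 0 ≤ y i ∧ y i ≤ (if (i : ℕ) < k then 1 else 0)} with hQ
  set Ek : ℕ → Set (EuclideanSpace ℝ (Fin (m+1))) := fun k =>
    {x | ∀ y ∈ Q k, x + y ∈ K} with hEk
  have hQ0 : ∀ k, (0 : EuclideanSpace ℝ (Fin (m+1))) ∈ Q k := by
    intro k i
    refine ⟨le_refl _, ?_⟩
    show (0:ℝ) ≤ _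
    split <;> norm_num
  have hEkcl : ∀ k, IsClosed (Ek k) := by
    intro k
    have h : Ek k = ⋂ y ∈ Q k, (fun x => x + y) ⁻¹' K := by ext x; simp [hEk]
    rw [h]; exact isClosed_biInter fun y _ => hKcl.preimage (continuous_add_right _)
  have hEkconv : ∀ k, Convex ℝ (Ek k) := by
    intro k
    have h : Ek k = ⋂ y ∈ Q k, (fun x => x + y) ⁻¹' K := by ext x; simp [hEk]
    rw [h]; exact convex_iInter₂ fun y _ => hKconv.translate_preimage_left _
  have hEksub : ∀ k, Ek k ⊆ Metric.closedBall 0 r := by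
    intro k x hx
    have := hx 0 (hQ0 k)
    rw [add_zero] at this
    exact hKb this
  have hstep : ∀ k (hk : k < m + 1), Ek (k+1) =
      {x | ∀ s ∈ Set.Icc (0:ℝ) 1,
        x + s • EuclideanSpace.single (⟨k, hk⟩ : Fin (m+1)) (1:ℝ) ∈ Ek k} := by
    intro k hk
    set i : Fin (m+1) := ⟨k, hk⟩ with hi
    ext x
    constructor
    · intro hx s hs y hy
      have hyi : y i = 0 := by
        have := hy i
        rw [if_neg (by simp [hi])] at this
        exact le_antisymm this.2 this.1
      have hy' : y + s • EuclideanSpace.single i (1:ℝ) ∈ Q (k+1) := by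
        intro j
        have hj := hy j
        have hcoord : (y + s • EuclideanSpace.single i (1:ℝ)) j
            = y j + s * (if j = i then 1 else 0) := by
          simp [EuclideanSpace.single_apply]
        rw [hcoord]
        rcases eq_or_ne j i with rfl | hne
        · rw [if_pos rfl, hyi, if_pos (by simp [hi])]
          simpa using hs
        · rw [if_neg hne, mul_zero, add_zero]
          refine ⟨hj.1, ?_⟩
          have hji : (j : ℕ) ≠ k := by
            intro hjk
            exact hne (Fin.ext (by simp [hi, hjk]))
          rcases lt_or_ge (j : ℕ) k with h | h
          · rw [if_pos (by omega)]
            exact le_trans hj.2 (by split <;> norm_num)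
          · rw [if_neg (by omega)]
            have := hj.2
            rwa [if_neg (by omega)] at this
      have := hx _ hy'
      rwa [← add_assoc, add_right_comm] at this
    · intro hx y hy
      have hyi : y i ∈ Set.Icc (0:ℝ) 1 := by
        have := hy i
        rw [if_pos (by simp [hi])] at this
        exact this
      have hy' : y - (y i) • EuclideanSpace.single i (1:ℝ) ∈ Q k := by
        intro j
        have hj := hy j
        have hcoord : (y - (y i) • EuclideanSpace.single i (1:ℝ)) j
            = y j - y i * (if j = i then 1 else 0) := by
          simp [EuclideanSpace.single_apply]
        rw [hcoord]
        rcases eq_or_ne j i with rfl | hne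
        · rw [if_pos rfl, if_neg (by simp [hi])]
          norm_num
        · rw [if_neg hne, mul_zero, sub_zero]
          refine ⟨hj.1, ?_⟩
          have hji : (j : ℕ) ≠ k := by
            intro hjk
            exact hne (Fin.ext (by simp [hi, hjk]))
          rcases lt_or_ge (j : ℕ) k with h | h
          · rw [if_pos h]
            exact le_trans hj.2 (by split <;> norm_num)
          · rw [if_neg (by omega)]
            have := hj.2
            rwa [if_neg (by omega)] at this
      have := hx (y i) hyi _ hy'
      have harr : x + (y i) • EuclideanSpace.single i (1:ℝ)
          + (y - (y i) • EuclideanSpace.single i (1:ℝ)) = x + y := by abel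
      rwa [harr] at this
  have main : ∀ k, k ≤ m + 1 → volume K ≤ volume (Ek k) + k * c := by
    intro k
    induction k with
    | zero =>
      intro _
      have hsub : K ⊆ Ek 0 := by
        intro x hx y hy
        have hy0 : y = 0 := by
          ext j
          have h := hy j
          rw [if_neg (Nat.not_lt_zero _)] at h
          exact le_antisymm h.2 h.1
        rw [hy0, add_zero]; exact hx
      simpa using measure_mono hsub
    | succ k ih =>
      intro hk1
      have hk : k < m + 1 := hk1
      calc volume K ≤ volume (Ek k) + k * c := ih (by omega)
        _ ≤ (volume (Ek (k+1)) + c) + k * c := by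
            gcongr
            have h := erosion_step hr.le (hEkconv k) (hEkcl k) (hEksub k) (⟨k, hk⟩ : Fin (m+1))
            rw [← hstep k hk] at h
            exact h
        _ = volume (Ek (k+1)) + (k+1 : ℕ) * c := by push_cast; ring
  -- finiteness facts
  have hνfin : ν ≠ ⊤ := measure_closedBall_lt_top.ne
  have hcfin : c ≠ ⊤ := ENNReal.mul_ne_top ENNReal.ofReal_ne_top hνfin
  set T := {x : EuclideanSpace ℝ (Fin (m+1)) |
      ∀ y : EuclideanSpace ℝ (Fin (m+1)), (∀ i, 0 ≤ y i ∧ y i < 1) → y + x ∈ A} with hT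
  have hTsub : T ⊆ Metric.closedBall 0 r := by
    intro x hx
    have := hx 0 (fun i => by constructor <;> simp)
    rw [zero_add] at this
    exact hAr this
  have hTfin : volume T ≠ ⊤ := ((measure_mono hTsub).trans_lt measure_closedBall_lt_top).ne
  have hrm : (0:ℝ) ≤ r ^ m := by positivity
  show (volume A).toReal - ((m+1:ℕ):ℝ) * r ^ m * ν.toReal ≤ (volume T).toReal
  by_cases hint : (interior A).Nonempty
  · -- main case
    obtain ⟨x₀, hx₀⟩ := hint
    have hintsub : interior (Ek (m+1)) ⊆ T := by
      intro x hx
      obtain ⟨ε, hε, hball⟩ := Metric.mem_nhds_iff.mp (mem_interior_iff_mem_nhds.mp hx)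
      intro y hy
      have hyQ : y ∈ Q (m+1) := by
        intro i
        exact ⟨(hy i).1, by rw [if_pos i.isLt]; exact (hy i).2.le⟩
      have hxy : x + y ∈ interior K := by
        rw [mem_interior_iff_mem_nhds]
        refine Metric.mem_nhds_iff.mpr ⟨ε, hε, ?_⟩
        intro z hz
        have hzball : z - y ∈ Metric.ball x ε := by
          rw [Metric.mem_ball, dist_eq_norm] at hz ⊢
          have : z - y - x = z - (x + y) := by abel
          rw [this]
          exact hz
        have := (hball hzball) y hyQ
        rwa [sub_add_cancel] at this
      have : x + y ∈ A := convex_interior_closure_subset hconv hx₀ hxy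
      rwa [add_comm x y] at this
    have hvol1 : volume (Ek (m+1)) ≤ volume T := by
      calc volume (Ek (m+1)) ≤ volume (interior (Ek (m+1)) ∪ frontier (Ek (m+1))) := by
            apply measure_mono
            rw [← closure_eq_interior_union_frontier]
            exact subset_closure
        _ ≤ volume (interior (Ek (m+1))) + volume (frontier (Ek (m+1))) := measure_union_le _ _
        _ = volume (interior (Ek (m+1))) := by
            rw [(hEkconv (m+1)).addHaar_frontier volume, add_zero]
        _ ≤ volume T := measure_mono hintsub
    have hfinal : volume A ≤ volume T + (m+1 : ℕ) * c :=
      calc volume A ≤ volume K := measure_mono subset_closure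
        _ ≤ volume (Ek (m+1)) + (m+1 : ℕ) * c := main (m+1) le_rfl
        _ ≤ volume T + (m+1 : ℕ) * c := by gcongr
    have hrhs_fin : volume T + (m+1 : ℕ) * c ≠ ⊤ := by
      refine ENNReal.add_ne_top.mpr ⟨hTfin, ?_⟩
      exact ENNReal.mul_ne_top (by simp) hcfin
    have h1 := ENNReal.toReal_mono hrhs_fin hfinal
    rw [ENNReal.toReal_add hTfin (ENNReal.mul_ne_top (by simp) hcfin)] at h1
    have h2 : (((m+1 : ℕ) : ℝ≥0∞) * c).toReal = ((m+1 : ℕ) : ℝ) * r ^ m * ν.toReal := by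
      rw [ENNReal.toReal_mul, hc, ENNReal.toReal_mul, ENNReal.toReal_ofReal hrm,
        ENNReal.toReal_natCast]
      ring
    rw [h2] at h1
    linarith
  · -- degenerate case
    have hintempty : interior A = ∅ := Set.not_nonempty_iff_eq_empty.mp hint
    have hA0 : volume A = 0 := by
      apply measure_mono_null _ (hconv.addHaar_frontier volume)
      rw [frontier, hintempty, Set.diff_empty]
      exact subset_closure
    have h1 : (0:ℝ) ≤ (volume T).toReal := ENNReal.toReal_nonneg
    have h2 : (0:ℝ) ≤ ((m+1:ℕ):ℝ) * r ^ m * ν.toReal := by positivity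
    have h3 : (volume A).toReal = 0 := by rw [hA0, ENNReal.toReal_zero]
    linarith
end

section
/- Let n ≥ 2, 0 < γ ≤ 1, and let q₁ ≠ q₂ ∈ ℝⁿ be such that there exist disjoint sets Cᵢ ⊆ Bₙ + qᵢ with μ(Cᵢ) ≥ γμ(Bₙ). Then ‖q₁ − q₂‖/2 ≥ 1 − (√(2πn)·(1 − γ))^{2/(n+1)} (when the right side is nonnegative). -/
open MeasureTheory Metric Real Set

lemma wendel_gamma {x : ℝ} (hx : 0 < x) :
    Real.Gamma (x + 1/2) ≤ Real.Gamma (x + 1) / Real.sqrt x := by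
  have hx1 : (0:ℝ) < x + 1 := by linarith
  have hgx : 0 < Real.Gamma x := Real.Gamma_pos_of_pos hx
  have hgx1 : 0 < Real.Gamma (x + 1) := Real.Gamma_pos_of_pos hx1
  have h := Real.convexOn_log_Gamma.2 (Set.mem_Ioi.mpr hx) (Set.mem_Ioi.mpr hx1)
      (by norm_num : (0:ℝ) ≤ 1/2) (by norm_num : (0:ℝ) ≤ 1/2) (by norm_num)
  simp only [smul_eq_mul, Function.comp_apply] at h
  have harg : (1/2 : ℝ) * x + 1/2 * (x + 1) = x + 1/2 := by ring
  rw [harg] at h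
  have hpos : 0 < Real.Gamma (x + 1/2) := Real.Gamma_pos_of_pos (by linarith)
  have key := Real.exp_le_exp.mpr h
  rw [Real.exp_log hpos, Real.exp_add] at key
  have e1 : Real.exp (1/2 * Real.log (Real.Gamma x)) = Real.sqrt (Real.Gamma x) := by
    rw [mul_comm, ← Real.rpow_def_of_pos hgx, ← Real.sqrt_eq_rpow]
  have e2 : Real.exp (1/2 * Real.log (Real.Gamma (x+1))) = Real.sqrt (Real.Gamma (x+1)) := by
    rw [mul_comm, ← Real.rpow_def_of_pos hgx1, ← Real.sqrt_eq_rpow]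
  rw [e1, e2] at key
  have hGamma : Real.Gamma x = Real.Gamma (x + 1) / x := by
    rw [Real.Gamma_add_one hx.ne']; field_simp
  calc Real.Gamma (x + 1/2) ≤ Real.sqrt (Real.Gamma x) * Real.sqrt (Real.Gamma (x+1)) := key
    _ = Real.Gamma (x + 1) / Real.sqrt x := by
        rw [hGamma, Real.sqrt_div hgx1.le, div_mul_eq_mul_div,
          Real.mul_self_sqrt hgx1.le]
lemma slice_volume (k : ℕ) (hk : 0 < k) {r : ℝ} (hr : 0 ≤ r) :
    volume {y : Fin k → ℝ | ∑ i, y i ^ 2 ≤ r ^ 2}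
      = ENNReal.ofReal r ^ k * ENNReal.ofReal (Real.sqrt π ^ k / Real.Gamma (k / 2 + 1)) := by
  have : Nonempty (Fin k) := Fin.pos_iff_nonempty.mp hk
  set A : Set (Fin k → ℝ) := {y : Fin k → ℝ | ∑ i, y i ^ 2 ≤ r ^ 2} with hA
  have hAm : MeasurableSet A := by
    apply measurableSet_le _ measurable_const
    exact Finset.measurable_sum _ fun i _ => (measurable_pi_apply i).pow_const 2
  have hmp := EuclideanSpace.volume_preserving_symm_measurableEquiv_toLp (Fin k)
  have hpre := hmp.measure_preimage hAm.nullMeasurableSet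
  have hball : (MeasurableEquiv.toLp 2 (Fin k → ℝ)).symm ⁻¹' A
      = Metric.closedBall (0 : EuclideanSpace ℝ (Fin k)) r := by
    ext x
    simp only [Set.mem_preimage, hA, Set.mem_setOf_eq, Metric.mem_closedBall, dist_zero_right,
      EuclideanSpace.norm_eq, MeasurableEquiv.coe_toLp_symm,
      Real.norm_eq_abs, sq_abs]
    rw [← Real.sqrt_sq hr, Real.sqrt_le_sqrt_iff (by positivity), Real.sqrt_sq hr]
  rw [hball] at hpre
  rw [← hpre, EuclideanSpace.volume_closedBall, Fintype.card_fin]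
lemma J_eval (k : ℕ) {a : ℝ} (ha : 0 < a) :
    ∫ t in Icc (-a) a, Real.sqrt (a - |t|) ^ k = (4/((k:ℝ)+2)) * a ^ (((k:ℝ)+2)/2) := by
  set f : ℝ → ℝ := fun t => Real.sqrt (a - |t|) ^ k with hf
  have hcont : Continuous f := (Real.continuous_sqrt.comp (continuous_const.sub continuous_abs)).pow k
  have key : ∫ x in (0:ℝ)..a, f x = a ^ (((k:ℝ)+2)/2) / ((k:ℝ)/2 + 1) := by
    have e1 : ∫ x in (0:ℝ)..a, f x = ∫ x in (0:ℝ)..a, Real.sqrt (a - x) ^ k := by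
      apply intervalIntegral.integral_congr
      intro x hx
      rw [Set.uIcc_of_le ha.le] at hx
      simp only [hf, abs_of_nonneg hx.1]
    have e2 : ∫ x in (0:ℝ)..a, Real.sqrt (a - x) ^ k = ∫ x in (0:ℝ)..a, Real.sqrt x ^ k := by
      rw [intervalIntegral.integral_comp_sub_left (fun y => Real.sqrt y ^ k) a, sub_self, sub_zero]
    have e3 : ∫ x in (0:ℝ)..a, Real.sqrt x ^ k = ∫ x in (0:ℝ)..a, x ^ ((k:ℝ)/2) := by
      apply intervalIntegral.integral_congr
      intro x hx
      rw [Set.uIcc_of_le ha.le] at hx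
      show Real.sqrt x ^ k = x ^ ((k:ℝ)/2)
      rw [← Real.rpow_natCast (Real.sqrt x) k, Real.sqrt_eq_rpow, ← Real.rpow_mul hx.1]
      congr 1; ring
    have e4 : ∫ x in (0:ℝ)..a, x ^ ((k:ℝ)/2) = a ^ (((k:ℝ)+2)/2) / ((k:ℝ)/2 + 1) := by
      rw [integral_rpow (Or.inl (lt_of_lt_of_le neg_one_lt_zero (by positivity)))]
      rw [Real.zero_rpow (by positivity)]
      rw [show (k:ℝ)/2 + 1 = ((k:ℝ)+2)/2 by ring]
      ring
    rw [e1, e2, e3, e4]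
  have hneg : ∫ x in (-a)..(0:ℝ), f x = ∫ x in (0:ℝ)..a, f x := by
    have hev : (fun x => f (-x)) = f := funext fun x => by simp only [hf, abs_neg]
    conv_lhs => rw [← hev]
    rw [intervalIntegral.integral_comp_neg f, neg_zero, neg_neg]
  have hii : ∀ u v : ℝ, IntervalIntegrable f volume u v := fun u v => hcont.intervalIntegrable u v
  rw [MeasureTheory.integral_Icc_eq_integral_Ioc, ← intervalIntegral.integral_of_le (by linarith)]
  rw [← intervalIntegral.integral_add_adjacent_intervals (hii (-a) 0) (hii 0 a)]
  rw [hneg, key]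
  field_simp
  ring
lemma lens_subset (k : ℕ) {d a : ℝ} (hd0 : 0 ≤ d) (ha : a = 1 - d) :
    {x : EuclideanSpace ℝ (Fin (k+1)) | |x 0| ≤ a ∧ ∑ i : Fin k, x i.succ ^ 2 ≤ 1 - (|x 0| + d)^2}
      ⊆ Metric.closedBall ((d:ℝ) • EuclideanSpace.single (0 : Fin (k+1)) (1:ℝ)) 1 ∩
        Metric.closedBall (-((d:ℝ) • EuclideanSpace.single (0 : Fin (k+1)) (1:ℝ))) 1 := by
  set w : EuclideanSpace ℝ (Fin (k+1)) := (d:ℝ) • EuclideanSpace.single (0 : Fin (k+1)) (1:ℝ)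
    with hwdef
  have hw0 : w 0 = d := by simp [hwdef, EuclideanSpace.single_apply]
  have hws : ∀ i : Fin k, w i.succ = 0 := by
    intro i; simp [hwdef, EuclideanSpace.single_apply, Fin.succ_ne_zero]
  subst ha
  rintro x ⟨h1, h2⟩
  have habs : ∀ c : ℝ, (x 0 - c)^2 ≤ (|x 0| + |c|)^2 := by
    intro c
    have h3 : |x 0 - c| ≤ |x 0| + |c| := abs_sub _ _
    calc (x 0 - c)^2 = |x 0 - c|^2 := (sq_abs _).symm
      _ ≤ (|x 0| + |c|)^2 := by
          apply pow_le_pow_left₀ (abs_nonneg _) h3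
  constructor
  · rw [Metric.mem_closedBall, EuclideanSpace.dist_eq]
    rw [show Real.sqrt (∑ i, dist (x i) (w i) ^ 2) ≤ 1 ↔
        (∑ i, dist (x i) (w i) ^ 2) ≤ 1 from Real.sqrt_le_one]
    rw [Fin.sum_univ_succ]
    simp only [hw0, hws, Real.dist_eq, sub_zero, sq_abs]
    have := habs d
    rw [abs_of_nonneg hd0] at this
    linarith
  · rw [Metric.mem_closedBall, EuclideanSpace.dist_eq]
    rw [show Real.sqrt (∑ i, dist (x i) ((-w) i) ^ 2) ≤ 1 ↔
        (∑ i, dist (x i) ((-w) i) ^ 2) ≤ 1 from Real.sqrt_le_one]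
    rw [Fin.sum_univ_succ]
    have e0 : (-w) 0 = -d := by rw [PiLp.neg_apply, hw0]
    have es : ∀ i : Fin k, (-w) i.succ = 0 := by
      intro i; rw [PiLp.neg_apply, hws, neg_zero]
    simp only [e0, es, Real.dist_eq, sub_zero, sq_abs, sub_neg_eq_add]
    have := habs (-d)
    rw [abs_neg, abs_of_nonneg hd0, sub_neg_eq_add] at this
    linarith
lemma lens_volume (k : ℕ) (hk : 0 < k) {d : ℝ} (hd0 : 0 ≤ d) (hd1 : d < 1) :
    ENNReal.ofReal ((4 / ((k:ℝ) + 2)) * (1 - d) ^ (((k:ℝ) + 2) / 2)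
        * (Real.sqrt π ^ k / Real.Gamma (k / 2 + 1)))
      ≤ volume (Metric.closedBall (d • EuclideanSpace.single (0 : Fin (k+1)) (1:ℝ)) 1 ∩
          Metric.closedBall (-(d • EuclideanSpace.single (0 : Fin (k+1)) (1:ℝ))) 1) := by
  set a : ℝ := 1 - d with ha
  have ha0 : 0 < a := by rw [ha]; linarith
  set L : Set (EuclideanSpace ℝ (Fin (k+1))) :=
    {x | |x 0| ≤ a ∧ ∑ i : Fin k, x i.succ ^ 2 ≤ 1 - (|x 0| + d)^2} with hL
  set T : Set (ℝ × (Fin k → ℝ)) :=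
    {p : ℝ × (Fin k → ℝ) | |p.1| ≤ a ∧ ∑ i, p.2 i ^ 2 ≤ 1 - (|p.1| + d)^2} with hT
  have hTm : MeasurableSet T := by
    have h1 : MeasurableSet {p : ℝ × (Fin k → ℝ) | |p.1| ≤ a} :=
      measurableSet_le measurable_fst.abs measurable_const
    have h2 : MeasurableSet {p : ℝ × (Fin k → ℝ) | ∑ i, p.2 i ^ 2 ≤ 1 - (|p.1| + d)^2} :=
      measurableSet_le
        (Finset.measurable_sum _ fun i _ => ((measurable_pi_apply i).comp measurable_snd).pow_const 2)
        (measurable_const.sub (((measurable_fst.abs).add_const d).pow_const 2))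
    exact h1.inter h2
  -- volume of L equals iterated integral
  have hvolL : volume L = ∫⁻ t : ℝ, volume (Prod.mk t ⁻¹' T) := by
    have hmp := (MeasureTheory.volume_preserving_piFinSuccAbove (fun _ : Fin (k+1) => ℝ) 0).comp
      (EuclideanSpace.volume_preserving_symm_measurableEquiv_toLp (Fin (k+1)))
    have hpre := hmp.measure_preimage hTm.nullMeasurableSet
    have hLT : (⇑(MeasurableEquiv.piFinSuccAbove (fun _ : Fin (k+1) => ℝ) 0) ∘
        ⇑(MeasurableEquiv.toLp 2 (Fin (k+1) → ℝ)).symm) ⁻¹' T = L := by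
      ext x
      have happ : (MeasurableEquiv.piFinSuccAbove (fun _ : Fin (k+1) => ℝ) 0)
          ((MeasurableEquiv.toLp 2 (Fin (k+1) → ℝ)).symm x) = (x 0, fun i => x i.succ) := rfl
      simp only [Set.mem_preimage, Function.comp_apply, happ, hT, Set.mem_setOf_eq, hL]
    rw [hLT] at hpre
    rw [hpre, Measure.volume_eq_prod, Measure.prod_apply hTm]
  -- pointwise lower bound for the slices
  set c : ENNReal := ENNReal.ofReal (Real.sqrt π ^ k / Real.Gamma (k / 2 + 1)) with hc
  set f : ℝ → ℝ := fun t => Real.sqrt (a - |t|) ^ k with hf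
  have hfnn : ∀ t, 0 ≤ f t := fun t => by positivity
  have hslice : ∀ t ∈ Icc (-a) a, ENNReal.ofReal (f t) * c ≤ volume (Prod.mk t ⁻¹' T) := by
    intro t ht
    have hta : |t| ≤ a := abs_le.mpr ⟨ht.1, ht.2⟩
    have hnn : 0 ≤ a - |t| := by linarith
    have hsubset : {y : Fin k → ℝ | ∑ i, y i ^ 2 ≤ Real.sqrt (a - |t|) ^ 2}
        ⊆ Prod.mk t ⁻¹' T := by
      intro y hy
      simp only [Set.mem_setOf_eq] at hy
      rw [Real.sq_sqrt hnn] at hy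
      refine ⟨hta, ?_⟩
      have h1 : a - |t| ≤ 1 - (|t| + d)^2 := by
        have h2 : |t| + d ≤ 1 := by rw [ha] at hta; linarith
        have h3 : 0 ≤ |t| + d := by positivity
        nlinarith [mul_nonneg h3 (by linarith : (0:ℝ) ≤ 1 - (|t| + d))]
      exact le_trans hy h1
    calc ENNReal.ofReal (f t) * c
        = volume {y : Fin k → ℝ | ∑ i, y i ^ 2 ≤ Real.sqrt (a - |t|) ^ 2} := by
          rw [slice_volume k hk (Real.sqrt_nonneg _), hc, hf,
            ENNReal.ofReal_pow (Real.sqrt_nonneg _)]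
      _ ≤ volume (Prod.mk t ⁻¹' T) := measure_mono hsubset
  -- put everything together
  have hmeas : Measurable fun t => ENNReal.ofReal (f t) := by
    apply ENNReal.measurable_ofReal.comp
    exact ((Real.continuous_sqrt.comp (continuous_const.sub continuous_abs)).pow k).measurable
  have hint : IntegrableOn f (Icc (-a) a) volume :=
    ((Real.continuous_sqrt.comp (continuous_const.sub continuous_abs)).pow k).integrableOn_Icc
  calc ENNReal.ofReal ((4 / ((k:ℝ) + 2)) * (1 - d) ^ (((k:ℝ) + 2) / 2)
        * (Real.sqrt π ^ k / Real.Gamma (k / 2 + 1)))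
      = ENNReal.ofReal ((4 / ((k:ℝ) + 2)) * a ^ (((k:ℝ) + 2) / 2)) * c := by
        rw [hc, ← ha, ENNReal.ofReal_mul (by positivity)]
    _ = ENNReal.ofReal (∫ t in Icc (-a) a, f t) * c := by rw [J_eval k ha0]
    _ = (∫⁻ t in Icc (-a) a, ENNReal.ofReal (f t)) * c := by
        rw [MeasureTheory.ofReal_integral_eq_lintegral_ofReal hint
          (Filter.Eventually.of_forall hfnn)]
    _ = ∫⁻ t in Icc (-a) a, ENNReal.ofReal (f t) * c := by
        rw [lintegral_mul_const c hmeas]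
    _ ≤ ∫⁻ t in Icc (-a) a, volume (Prod.mk t ⁻¹' T) := by
        apply setLIntegral_mono' measurableSet_Icc hslice
    _ ≤ ∫⁻ t : ℝ, volume (Prod.mk t ⁻¹' T) := setLIntegral_le_lintegral _ _
    _ = volume L := hvolL.symm
    _ ≤ _ := measure_mono (lens_subset k hd0 ha)
set_option maxHeartbeats 1000000 in
lemma reduce_balls (n : ℕ) (q₁ q₂ w : EuclideanSpace ℝ (Fin n)) (hw : ‖w‖ = ‖q₁ - q₂‖ / 2) :
    volume (Metric.closedBall q₁ 1 ∩ Metric.closedBall q₂ 1)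
      = volume (Metric.closedBall w 1 ∩ Metric.closedBall (-w) 1) := by
  set m : EuclideanSpace ℝ (Fin n) := (2:ℝ)⁻¹ • (q₁ + q₂) with hm
  set v : EuclideanSpace ℝ (Fin n) := (2:ℝ)⁻¹ • (q₁ - q₂) with hv
  have hq1 : q₁ - m = v := by rw [hm, hv]; module
  have hq2 : q₂ - m = -v := by rw [hm, hv]; module
  have hnv : ‖v‖ = ‖w‖ := by
    rw [hv, hw, norm_smul]
    simp [norm_inv]
    ring
  -- translation
  have htr_pre : (fun x => x + m) ⁻¹' (Metric.closedBall q₁ 1 ∩ Metric.closedBall q₂ 1)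
      = Metric.closedBall v 1 ∩ Metric.closedBall (-v) 1 := by
    ext x
    simp only [Set.mem_preimage, Set.mem_inter_iff, Metric.mem_closedBall]
    rw [show dist (x + m) q₁ = dist x (q₁ - m) by rw [dist_eq_norm]; rw [dist_eq_norm]; congr 1; abel,
       show dist (x + m) q₂ = dist x (q₂ - m) by rw [dist_eq_norm]; rw [dist_eq_norm]; congr 1; abel,
       hq1, hq2]
  have h1 : volume (Metric.closedBall q₁ 1 ∩ Metric.closedBall q₂ 1)
      = volume (Metric.closedBall v 1 ∩ Metric.closedBall (-v) 1) := by
    rw [← htr_pre]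
    exact (measure_preimage_add_right volume m _).symm
  -- reflection
  set f := Submodule.reflection (Submodule.span ℝ {v - w})ᗮ with hfdef
  have hfv : f v = w := Submodule.reflection_sub hnv
  have hfsymm : ∀ x y, dist (f x) (f y) = dist x y := fun x y => f.dist_map x y
  have hrefl_pre : ⇑f ⁻¹' (Metric.closedBall w 1 ∩ Metric.closedBall (-w) 1)
      = Metric.closedBall v 1 ∩ Metric.closedBall (-v) 1 := by
    ext x
    simp only [Set.mem_preimage, Set.mem_inter_iff, Metric.mem_closedBall]
    rw [show w = f v from hfv.symm, show -(f v) = f (-v) by rw [map_neg], hfsymm, hfsymm]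
  have h2 : volume (Metric.closedBall v 1 ∩ Metric.closedBall (-v) 1)
      = volume (Metric.closedBall w 1 ∩ Metric.closedBall (-w) 1) := by
    rw [← hrefl_pre]
    exact (f.measurePreserving).measure_preimage
      (((measurableSet_closedBall).inter measurableSet_closedBall).nullMeasurableSet)
  rw [h1, h2]
lemma sqrt_2pik (k : ℕ) :
    Real.sqrt (2 * Real.pi * ((k+1:ℕ):ℝ)) = 2 * Real.sqrt (((k:ℝ)+1)/2) * Real.sqrt π := by
  rw [show 2 * π * ((k+1:ℕ):ℝ) = (2 * Real.sqrt (((k:ℝ)+1)/2) * Real.sqrt π) ^ 2 by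
    have e1 : Real.sqrt (((k:ℝ)+1)/2) ^ 2 = ((k:ℝ)+1)/2 := Real.sq_sqrt (by positivity)
    have e2 : Real.sqrt π ^ 2 = π := Real.sq_sqrt Real.pi_pos.le
    push_cast
    nlinarith [e1, e2]]
  rw [Real.sqrt_sq (by positivity)]

set_option maxHeartbeats 1000000 in
/-- If `q₁ ≠ q₂` support disjoint subsets of `Bₙ + q₁`, `Bₙ + q₂` each of measure at least
`γ·μ(Bₙ)`, then `‖q₁ − q₂‖/2 ≥ 1 − (√(2πn)(1 − γ))^{2/(n+1)}` (when the right side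
is nonnegative). -/
theorem stmt_16 (n : ℕ) (hn : 2 ≤ n) (γ : ℝ) (hγ0 : 0 < γ) (hγ1 : γ ≤ 1)
    (q₁ q₂ : EuclideanSpace ℝ (Fin n)) (hne : q₁ ≠ q₂)
    (C₁ C₂ : Set (EuclideanSpace ℝ (Fin n)))
    (hC₁m : MeasurableSet C₁) (hC₂m : MeasurableSet C₂)
    (hC₁ : C₁ ⊆ Metric.closedBall q₁ 1) (hC₂ : C₂ ⊆ Metric.closedBall q₂ 1)
    (hdisj : Disjoint C₁ C₂)
    (hγ₁ : ENNReal.ofReal γ * volume (Metric.closedBall (0 : EuclideanSpace ℝ (Fin n)) 1)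
        ≤ volume C₁)
    (hγ₂ : ENNReal.ofReal γ * volume (Metric.closedBall (0 : EuclideanSpace ℝ (Fin n)) 1)
        ≤ volume C₂)
    (hrhs : 0 ≤ 1 - (Real.sqrt (2 * Real.pi * n) * (1 - γ)) ^ (2 / ((n : ℝ) + 1))) :
    1 - (Real.sqrt (2 * Real.pi * n) * (1 - γ)) ^ (2 / ((n : ℝ) + 1))
      ≤ ‖q₁ - q₂‖ / 2 := by
  have h1γ : (0:ℝ) ≤ 1 - γ := by linarith
  set d : ℝ := ‖q₁ - q₂‖ / 2 with hd
  have hd0 : 0 ≤ d := by rw [hd]; positivity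
  set y : ℝ := Real.sqrt (2 * Real.pi * n) * (1 - γ) with hy
  have hy0 : 0 ≤ y := mul_nonneg (Real.sqrt_nonneg _) h1γ
  rcases le_or_gt 1 d with hd1 | hd1
  · have := Real.rpow_nonneg hy0 (2 / ((n:ℝ) + 1))
    linarith
  -- main case : d < 1
  obtain ⟨k, rfl⟩ : ∃ k, n = k + 1 := ⟨n - 1, by omega⟩
  have hk : 0 < k := by omega
  set w : EuclideanSpace ℝ (Fin (k+1)) := d • EuclideanSpace.single (0 : Fin (k+1)) (1:ℝ) with hwdef
  have hw : ‖w‖ = ‖q₁ - q₂‖ / 2 := by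
    rw [hwdef, norm_smul, EuclideanSpace.norm_single, norm_one, mul_one, Real.norm_eq_abs,
      abs_of_nonneg hd0, hd]
  set s : ℝ := Real.sqrt π with hs
  have hsπ : 0 < s := Real.sqrt_pos.mpr Real.pi_pos
  set G1 : ℝ := Real.Gamma ((k:ℝ) / 2 + 1) with hG1
  set G2 : ℝ := Real.Gamma (((k:ℝ)+1) / 2 + 1) with hG2
  have hG1pos : 0 < G1 := Real.Gamma_pos_of_pos (by positivity)
  have hG2pos : 0 < G2 := Real.Gamma_pos_of_pos (by positivity)
  set A : ℝ := (1 - d) ^ (((k:ℝ) + 2) / 2) with hA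
  have hApos : 0 < A := Real.rpow_pos_of_pos (by linarith) _
  have hμB : volume (Metric.closedBall (0 : EuclideanSpace ℝ (Fin (k+1))) 1)
      = ENNReal.ofReal (s ^ (k+1) / G2) := by
    rw [EuclideanSpace.volume_closedBall, Fintype.card_fin]
    simp only [ENNReal.ofReal_one, one_pow, one_mul, hs, hG2]
    congr 2
    push_cast
    ring
  -- lower bound for intersection
  have hlow : ENNReal.ofReal ((4 / ((k:ℝ) + 2)) * A * (s ^ k / G1))
      ≤ volume (Metric.closedBall q₁ 1 ∩ Metric.closedBall q₂ 1) := by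
    rw [reduce_balls (k+1) q₁ q₂ w hw]
    exact lens_volume k hk hd0 hd1
  -- upper bound from disjoint sets
  have hub : volume (Metric.closedBall q₁ 1 ∩ Metric.closedBall q₂ 1)
      + ENNReal.ofReal (2 * γ * (s ^ (k+1) / G2)) ≤ ENNReal.ofReal (2 * (s ^ (k+1) / G2)) := by
    have hb1 : volume (Metric.closedBall q₁ 1) = ENNReal.ofReal (s ^ (k+1) / G2) := by
      rw [Measure.addHaar_closedBall_center volume q₁ 1, hμB]
    have hb2 : volume (Metric.closedBall q₂ 1) = ENNReal.ofReal (s ^ (k+1) / G2) := by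
      rw [Measure.addHaar_closedBall_center volume q₂ 1, hμB]
    have hCle : ENNReal.ofReal (2 * γ * (s ^ (k+1) / G2))
        ≤ volume (Metric.closedBall q₁ 1 ∪ Metric.closedBall q₂ 1) := by
      have h1 : volume (C₁ ∪ C₂) = volume C₁ + volume C₂ := measure_union hdisj hC₂m
      have h2 : volume (C₁ ∪ C₂) ≤ volume (Metric.closedBall q₁ 1 ∪ Metric.closedBall q₂ 1) :=
        measure_mono (Set.union_subset_union hC₁ hC₂)
      calc ENNReal.ofReal (2 * γ * (s ^ (k+1) / G2))
          = ENNReal.ofReal γ * ENNReal.ofReal (s ^ (k+1) / G2)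
            + ENNReal.ofReal γ * ENNReal.ofReal (s ^ (k+1) / G2) := by
            rw [← ENNReal.ofReal_mul hγ0.le, ← ENNReal.ofReal_add (by positivity) (by positivity)]
            congr 1; ring
        _ ≤ volume C₁ + volume C₂ := by rw [← hμB]; exact add_le_add hγ₁ hγ₂
        _ = volume (C₁ ∪ C₂) := h1.symm
        _ ≤ _ := h2
    calc volume (Metric.closedBall q₁ 1 ∩ Metric.closedBall q₂ 1)
          + ENNReal.ofReal (2 * γ * (s ^ (k+1) / G2))
        ≤ volume (Metric.closedBall q₁ 1 ∩ Metric.closedBall q₂ 1)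
          + volume (Metric.closedBall q₁ 1 ∪ Metric.closedBall q₂ 1) := add_le_add le_rfl hCle
      _ = volume (Metric.closedBall q₁ 1 ∪ Metric.closedBall q₂ 1)
          + volume (Metric.closedBall q₁ 1 ∩ Metric.closedBall q₂ 1) := add_comm _ _
      _ = volume (Metric.closedBall q₁ 1) + volume (Metric.closedBall q₂ 1) :=
          measure_union_add_inter _ measurableSet_closedBall
      _ = ENNReal.ofReal (2 * (s ^ (k+1) / G2)) := by
          rw [hb1, hb2, ← ENNReal.ofReal_add (by positivity) (by positivity)]; congr 1; ring
  -- combine, to real inequality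
  have hkey : (4 / ((k:ℝ) + 2)) * A * (s ^ k / G1) ≤ 2 * (1 - γ) * (s ^ (k+1) / G2) := by
    have hcomb := le_trans (add_le_add hlow le_rfl) hub
    rw [← ENNReal.ofReal_add (by positivity) (by positivity)] at hcomb
    have := (ENNReal.ofReal_le_ofReal_iff (by positivity)).mp hcomb
    nlinarith [this]
  -- Wendel's bound
  set x : ℝ := ((k:ℝ) + 1) / 2 with hx
  have hxpos : 0 < x := by rw [hx]; positivity

  have hsx : 0 < Real.sqrt x := Real.sqrt_pos.mpr hxpos
  have hw2 : Real.sqrt x * G1 ≤ G2 := by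
    have h1 : (k:ℝ) / 2 + 1 = x + 1/2 := by rw [hx]; try ring
    have h2 : ((k:ℝ)+1) / 2 + 1 = x + 1 := by rw [hx]; try ring
    have h3 := wendel_gamma hxpos
    rw [← h1, ← h2, ← hG1, ← hG2, le_div_iff₀ hsx] at h3
    linarith [h3]
  have hy' : y = 2 * Real.sqrt x * s * (1 - γ) := by
    rw [hy, sqrt_2pik k, ← hx, ← hs]
  have hAy : A ≤ y := by
    have hnn : (0:ℝ) ≤ 2 * (1-γ) * s ^ (k+1) * G1 :=
      mul_nonneg (mul_nonneg (mul_nonneg (by norm_num) h1γ) (by positivity)) hG1pos.le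
    have h5 : A * (4 * s ^ k * G2) ≤ y * (4 * s ^ k * G2) := by
      calc A * (4 * s ^ k * G2)
          = ((4/((k:ℝ)+2)) * A * (s ^ k / G1)) * (((k:ℝ)+2) * G1 * G2) := by
            field_simp
        _ ≤ (2*(1-γ)*(s ^ (k+1) / G2)) * (((k:ℝ)+2) * G1 * G2) :=
            mul_le_mul_of_nonneg_right hkey (by positivity)
        _ = (2*(1-γ)* s ^ (k+1) * G1) * ((k:ℝ)+2) := by field_simp
        _ ≤ (2*(1-γ)* s ^ (k+1) * G1) * (2*((k:ℝ)+1)) := by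
            apply mul_le_mul_of_nonneg_left _ hnn
            have : (0:ℝ) ≤ (k:ℝ) := Nat.cast_nonneg k
            linarith
        _ = (8*(1-γ)* s ^ (k+1) * Real.sqrt x) * (Real.sqrt x * G1) := by
            have hxx : Real.sqrt x * Real.sqrt x = x := Real.mul_self_sqrt hxpos.le
            rw [show (8*(1-γ)* s ^ (k+1) * Real.sqrt x) * (Real.sqrt x * G1)
              = 8*(1-γ)* s ^ (k+1) * G1 * (Real.sqrt x * Real.sqrt x) by ring, hxx, hx]
            ring
        _ ≤ (8*(1-γ)* s ^ (k+1) * Real.sqrt x) * G2 := by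
            have h8 : (0:ℝ) ≤ 8*(1-γ)* s ^ (k+1) * Real.sqrt x :=
              mul_nonneg (mul_nonneg (mul_nonneg (by norm_num) h1γ) (by positivity)) hsx.le
            exact mul_le_mul_of_nonneg_left hw2 h8
        _ = y * (4 * s ^ k * G2) := by rw [hy']; ring
    exact le_of_mul_le_mul_right h5 (by positivity)
  -- conclude
  have h1d : (0:ℝ) ≤ 1 - d := by linarith
  have hfinal : 1 - d ≤ y ^ ((2:ℝ) / (((k:ℝ)+1) + 1)) := by
    have hexp : (((k:ℝ) + 2) / 2) * ((2:ℝ) / (((k:ℝ)+1) + 1)) = 1 := by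
      field_simp
      ring
    calc 1 - d = ((1-d) ^ (((k:ℝ) + 2) / 2)) ^ ((2:ℝ) / (((k:ℝ)+1) + 1)) := by
          rw [← Real.rpow_mul h1d, hexp, Real.rpow_one]
      _ ≤ y ^ ((2:ℝ) / (((k:ℝ)+1) + 1)) :=
          Real.rpow_le_rpow (Real.rpow_nonneg h1d _) hAy (by positivity)
  have hgoalcast : ((k+1 : ℕ) : ℝ) + 1 = ((k:ℝ) + 1) + 1 := by push_cast; ring
  rw [hgoalcast]
  linarith [hfinal]
end
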